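/- arXiv:1712.02019 — 8 statements merged into one kernel-verified Lean document; each statement's English description precedes it below -/
import Mathlib

section
/- Let G be a finite p-group. A complex representation of G is faithful if and only if its restriction to Ω₁(Z(G)) is faithful, where Ω₁(Z(G)) = {g ∈ Z(G) : g^p = 1}. -/
/-- A nontrivial normal subgroup of a finite p-group contains a nontrivial central element. -/
lemma aux_normal_center {p : ℕ} [Fact p.Prime] {G : Type} [Group G] [Fintype G]
    (hG : IsPGroup p G) (N : Subgroup G) [N.Normal] (hN : N ≠ ⊥) :
    ∃ g : G, g ∈ N ∧ g ∈ Subgroup.center G ∧ g ≠ 1 := by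
  have hNp : IsPGroup p N := hG.to_subgroup N
  have hNnt : Nontrivial N := by
    rwa [← Subgroup.nontrivial_iff_ne_bot] at hN
  obtain ⟨k, hk0, hk⟩ := hNp.nontrivial_iff_card.mp hNnt
  have hdvd : p ∣ Nat.card N := hk ▸ dvd_pow_self _ hk0.ne'
  have hGc : IsPGroup p (ConjAct G) := hG.of_equiv ConjAct.toConjAct
  have h1 : (1 : N) ∈ MulAction.fixedPoints (ConjAct G) N := by
    intro g
    exact smul_one g
  obtain ⟨b, hb, hb1⟩ := hGc.exists_fixed_point_of_prime_dvd_card_of_fixed_point (α := N) hdvd h1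
  refine ⟨(b : G), b.2, ?_, ?_⟩
  · rw [Subgroup.mem_center_iff]
    intro g
    have h2 : g * (b : G) * g⁻¹ = (b : G) := by
      have h3 := congrArg Subtype.val (hb (ConjAct.toConjAct g))
      rw [ConjAct.Subgroup.val_conj_smul] at h3
      simpa [ConjAct.toConjAct_smul] using h3
    calc g * (b : G) = g * (b : G) * g⁻¹ * g := by group
      _ = (b : G) * g := by rw [h2]
  · intro h
    exact hb1 ((Subtype.ext h).symm)

/-- For a finite `p`-group `G`, a complex representation of `G` is faithful if and only if
its restriction to `Ω₁(Z(G)) = {g ∈ Z(G) : g^p = 1}` is faithful. -/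
theorem faithful_iff_faithful_on_omega_center
    {p : ℕ} [Fact p.Prime] {G : Type} [Group G] [Fintype G] (hG : IsPGroup p G)
    {n : ℕ} (ρ : G →* Matrix.GeneralLinearGroup (Fin n) ℂ) :
    Function.Injective ρ ↔
      Function.Injective
        (fun g : {g : G // g ∈ Subgroup.center G ∧ g ^ p = 1} => ρ g.1) := by
  constructor
  · intro h a b hab
    exact Subtype.ext (h hab)
  · intro h
    rw [injective_iff_map_eq_one]
    by_contra hcon
    push_neg at hcon
    obtain ⟨a, ha1, ha2⟩ := hcon
    have hker : ρ.ker ≠ ⊥ := by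
      intro hbot
      exact ha2 ((Subgroup.mem_bot).mp (hbot ▸ ha1))
    obtain ⟨g, hgN, hgc, hg1⟩ := aux_normal_center hG ρ.ker hker
    -- g has p-power order
    obtain ⟨k, hk⟩ := IsPGroup.iff_orderOf.mp hG g
    have hk0 : k ≠ 0 := by
      rintro rfl
      simp only [pow_zero, orderOf_eq_one_iff] at hk
      exact hg1 hk
    set c : G := g ^ (p ^ (k - 1)) with hc
    have hcp : c ^ p = 1 := by
      rw [hc, ← pow_mul, ← pow_succ, Nat.sub_add_cancel (Nat.one_le_iff_ne_zero.mpr hk0),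
        ← hk, pow_orderOf_eq_one]
    have hcne : c ≠ 1 := by
      intro hceq
      have : orderOf g ∣ p ^ (k - 1) := orderOf_dvd_of_pow_eq_one hceq
      rw [hk] at this
      have := Nat.pow_dvd_pow_iff_le_right (Fact.out (p := p.Prime)).one_lt |>.mp this
      omega
    have hcc : c ∈ Subgroup.center G := pow_mem hgc _
    have hcker : c ∈ ρ.ker := pow_mem hgN _
    have := h (a₁ := ⟨c, hcc, hcp⟩) (a₂ := ⟨1, Subgroup.one_mem _, one_pow p⟩)
      (by simpa using hcker)
    exact hcne (congrArg Subtype.val this)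
end

section
/- Let V be an m-dimensional vector space over the finite field F_q with q = p^f, and let S = {v₁, ..., v_{fm}} be a basis of V viewed as a vector space over the subfield F_p. Then S can be partitioned into f subsets S₁, ..., S_f, each of size m, such that each Sᵢ is a basis of V over F_q. -/
open Module Submodule Set

section Rado

variable {F V' : Type} [Field F] [AddCommGroup V'] [Module F V'] [FiniteDimensional F V']

/-- Terminal case of Rado's theorem: all sets singletons. -/
lemma rado_singleton {ι : Type} [Fintype ι] (A : ι → Finset V')
    (hA : ∀ J : Finset ι, J.card ≤ finrank F (span F (⋃ j ∈ (J : Set ι), (A j : Set V'))))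
    (h1 : ∀ i, (A i).card ≤ 1) :
    ∃ x : ι → V', (∀ i, x i ∈ A i) ∧ LinearIndependent F x := by
  have hne : ∀ i, (A i).Nonempty := by
    intro i
    rcases Finset.eq_empty_or_nonempty (A i) with h | h
    · exfalso
      have := hA {i}
      simp [h] at this
    · exact h
  choose x hx using hne
  refine ⟨x, hx, ?_⟩
  have hsingle : ∀ i, (A i : Set V') = {x i} := by
    intro i
    have := Finset.card_le_one.mp (h1 i)
    ext y
    simp only [Finset.mem_coe, Set.mem_singleton_iff]
    constructor
    · intro hy; exact this y hy (x i) (hx i)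
    · intro hy; subst hy; exact hx i
  rw [linearIndependent_iff_card_eq_finrank_span]
  have hle : Fintype.card ι ≤ Set.finrank F (Set.range x) := by
    have := hA Finset.univ
    have hU : (⋃ j ∈ ((Finset.univ : Finset ι) : Set ι), (A j : Set V')) = Set.range x := by
      ext y
      simp only [Set.mem_iUnion, Set.mem_range]
      constructor
      · rintro ⟨j, -, hy⟩; rw [hsingle j] at hy; exact ⟨j, hy.symm⟩
      · rintro ⟨j, rfl⟩; exact ⟨j, by simp, by rw [hsingle j]; rfl⟩
    rw [Set.finrank, ← hU]
    simpa using this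
  exact le_antisymm hle (finrank_range_le_card x)

lemma rado_sub {ι : Type} [Fintype ι] [DecidableEq ι] [DecidableEq V']
    (A : ι → Finset V')
    (hA : ∀ J : Finset ι, J.card ≤ finrank F (span F (⋃ j ∈ (J : Set ι), (A j : Set V'))))
    (k : ι) {a b : V'} (ha : a ∈ A k) (hb : b ∈ A k) (hab : a ≠ b)
    (h1 : ¬ (∀ J : Finset ι, J.card ≤ finrank F (span F
        (⋃ j ∈ (J : Set ι), ((Function.update A k ((A k).erase a) j : Finset V') : Set V')))))
    (h2 : ¬ (∀ J : Finset ι, J.card ≤ finrank F (span F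
        (⋃ j ∈ (J : Set ι), ((Function.update A k ((A k).erase b) j : Finset V') : Set V'))))) :
    False := by
  push_neg at h1 h2
  obtain ⟨J1, hJ1⟩ := h1
  obtain ⟨J2, hJ2⟩ := h2
  set A1 := Function.update A k ((A k).erase a) with hA1
  set A2 := Function.update A k ((A k).erase b) with hA2
  -- k must be in J1 and J2
  have hkJ : ∀ (c : V') (J : Finset ι), (¬ J.card ≤ finrank F (span F
      (⋃ j ∈ (J : Set ι), ((Function.update A k ((A k).erase c) j : Finset V') : Set V')))) → k ∈ J := by
    intro c J hJ
    by_contra hk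
    apply hJ
    have : (⋃ j ∈ (J : Set ι), ((Function.update A k ((A k).erase c) j : Finset V') : Set V'))
        = ⋃ j ∈ (J : Set ι), ((A j : Finset V') : Set V') := by
      apply Set.iUnion₂_congr
      intro j hj
      rw [Function.update_of_ne (by rintro rfl; exact hk hj)]
    rw [this]
    exact hA J
  have hkJ1 : k ∈ J1 := hkJ a J1 (by rw [← hA1]; omega)
  have hkJ2 : k ∈ J2 := hkJ b J2 (by rw [← hA2]; omega)
  set X := J1.erase k with hX
  set Y := J2.erase k with hY
  set U1 := span F (⋃ j ∈ (J1 : Set ι), ((A1 j : Finset V') : Set V')) with hU1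
  set U2 := span F (⋃ j ∈ (J2 : Set ι), ((A2 j : Finset V') : Set V')) with hU2
  have hcard1 : J1.card = X.card + 1 := by rw [hX, Finset.card_erase_of_mem hkJ1]; have := Finset.card_pos.mpr ⟨k, hkJ1⟩; omega
  have hcard2 : J2.card = Y.card + 1 := by rw [hY, Finset.card_erase_of_mem hkJ2]; have := Finset.card_pos.mpr ⟨k, hkJ2⟩; omega
  -- sup bound
  have hXsub : ∀ j ∈ X, (A j : Set V') ⊆ (U1 : Set V') := by
    intro j hj
    have hjk : j ≠ k := Finset.ne_of_mem_erase hj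
    have : (A j : Set V') ⊆ ⋃ j ∈ (J1 : Set ι), ((A1 j : Finset V') : Set V') := by
      intro y hy
      exact Set.mem_biUnion (Finset.mem_of_mem_erase hj) (by rwa [hA1, Function.update_of_ne hjk])
    exact this.trans subset_span
  have hYsub : ∀ j ∈ Y, (A j : Set V') ⊆ (U2 : Set V') := by
    intro j hj
    have hjk : j ≠ k := Finset.ne_of_mem_erase hj
    have : (A j : Set V') ⊆ ⋃ j ∈ (J2 : Set ι), ((A2 j : Finset V') : Set V') := by
      intro y hy
      exact Set.mem_biUnion (Finset.mem_of_mem_erase hj) (by rwa [hA2, Function.update_of_ne hjk])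
    exact this.trans subset_span
  have hsup : ((insert k (X ∪ Y) : Finset ι)).card ≤ finrank F ↥(U1 ⊔ U2) := by
    refine le_trans (hA (insert k (X ∪ Y))) (Submodule.finrank_mono ?_)
    rw [Submodule.span_le]
    intro y hy
    simp only [Set.mem_iUnion, Finset.coe_insert, Set.mem_insert_iff, Finset.mem_coe] at hy
    obtain ⟨j, hj, hyj⟩ := hy
    rcases hj with hj | hj
    · -- y ∈ A k
      rw [hj] at hyj
      rcases eq_or_ne y a with rfl | hya
      · -- y = a ≠ b, use U2
        have : y ∈ (A2 k : Set V') := by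
          rw [hA2, Function.update_self]
          exact Finset.mem_coe.mpr (Finset.mem_erase.mpr ⟨hab, hyj⟩)
        exact SetLike.mem_coe.mpr (le_sup_right (α := Submodule F V')
          (subset_span (Set.mem_biUnion hkJ2 this)))
      · have : y ∈ (A1 k : Set V') := by
          rw [hA1, Function.update_self]
          exact Finset.mem_coe.mpr (Finset.mem_erase.mpr ⟨hya, hyj⟩)
        exact SetLike.mem_coe.mpr (le_sup_left (α := Submodule F V')
          (subset_span (Set.mem_biUnion hkJ1 this)))
    · rcases Finset.mem_union.mp hj with hj | hj
      · exact SetLike.mem_coe.mpr (le_sup_left (α := Submodule F V') (hXsub j hj hyj))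
      · exact SetLike.mem_coe.mpr (le_sup_right (α := Submodule F V') (hYsub j hj hyj))
  have hinf : (X ∩ Y).card ≤ finrank F ↥(U1 ⊓ U2) := by
    refine le_trans (hA (X ∩ Y)) (Submodule.finrank_mono ?_)
    rw [Submodule.span_le]
    intro y hy
    simp only [Set.mem_iUnion, Finset.mem_coe] at hy
    obtain ⟨j, hj, hyj⟩ := hy
    have hjX := Finset.mem_of_mem_inter_left hj
    have hjY := Finset.mem_of_mem_inter_right hj
    exact SetLike.mem_coe.mpr ⟨hXsub j hjX hyj, hYsub j hjY hyj⟩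
  have hdim := Submodule.finrank_sup_add_finrank_inf_eq U1 U2
  have hins : (insert k (X ∪ Y)).card = (X ∪ Y).card + 1 := by
    rw [Finset.card_insert_of_notMem]
    simp [hX, hY]
  have hcui := Finset.card_union_add_card_inter X Y
  omega

lemma rado_aux {ι : Type} [Fintype ι] [DecidableEq ι] [DecidableEq V'] :
    ∀ (N : ℕ) (A : ι → Finset V'),
      (∑ i, (A i).card) ≤ N →
      (∀ J : Finset ι, J.card ≤ finrank F (span F (⋃ j ∈ (J : Set ι), (A j : Set V')))) →
      ∃ x : ι → V', (∀ i, x i ∈ A i) ∧ LinearIndependent F x := by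
  intro N
  induction N with
  | zero =>
    intro A hsum hA
    refine rado_singleton A hA (fun i => ?_)
    have h := Finset.single_le_sum (f := fun i => (A i).card) (fun _ _ => Nat.zero_le _)
      (Finset.mem_univ i)
    omega
  | succ N ih =>
    intro A hsum hA
    by_cases hbig : ∃ k, 2 ≤ (A k).card
    · obtain ⟨k, hk⟩ := hbig
      obtain ⟨a, ha, b, hb, hab⟩ := Finset.one_lt_card.mp (by omega : 1 < (A k).card)
      have hrec : ∀ c : V', c ∈ A k →
          (∀ J : Finset ι, J.card ≤ finrank F (span F
            (⋃ j ∈ (J : Set ι), ((Function.update A k ((A k).erase c) j : Finset V') : Set V')))) →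
          ∃ x : ι → V', (∀ i, x i ∈ A i) ∧ LinearIndependent F x := by
        intro c hc hcond
        have hsum' : (∑ i, ((Function.update A k ((A k).erase c)) i).card) ≤ N := by
          have e1 : ∀ (B : ι → Finset V'), ∑ i, (B i).card
              = (B k).card + ∑ i ∈ Finset.univ.erase k, (B i).card :=
            fun B => (Finset.add_sum_erase _ (fun i => (B i).card) (Finset.mem_univ k)).symm
          rw [e1] at hsum ⊢
          have e2 : ∑ i ∈ Finset.univ.erase k, ((Function.update A k ((A k).erase c)) i).card
              = ∑ i ∈ Finset.univ.erase k, (A i).card := by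
            refine Finset.sum_congr rfl (fun i hi => ?_)
            rw [Function.update_of_ne (Finset.ne_of_mem_erase hi)]
          rw [e2, Function.update_self, Finset.card_erase_of_mem hc]
          omega
        obtain ⟨x, hx, hli⟩ := ih (Function.update A k ((A k).erase c)) hsum' hcond
        refine ⟨x, fun i => ?_, hli⟩
        rcases eq_or_ne i k with rfl | hik
        · have := hx i
          rw [Function.update_self] at this
          exact Finset.mem_of_mem_erase this
        · have := hx i
          rwa [Function.update_of_ne hik] at this
      by_cases h1 : (∀ J : Finset ι, J.card ≤ finrank F (span F
          (⋃ j ∈ (J : Set ι), ((Function.update A k ((A k).erase a) j : Finset V') : Set V'))))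
      · exact hrec a ha h1
      · by_cases h2 : (∀ J : Finset ι, J.card ≤ finrank F (span F
            (⋃ j ∈ (J : Set ι), ((Function.update A k ((A k).erase b) j : Finset V') : Set V'))))
        · exact hrec b hb h2
        · exact absurd (rado_sub A hA k ha hb hab h1 h2) not_false
    · push_neg at hbig
      exact rado_singleton A hA (fun i => by have := hbig i; omega)

end Rado

/-- Let `V` be an `m`-dimensional vector space over `F = 𝔽_q` with `q = p^f`, and let
`S = {v₁, …, v_{fm}}` be a basis of `V` viewed as a vector space over the subfield
`K = 𝔽_p`.  Then `S` can be partitioned into `f` subsets, each of size `m`, each of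
which is a basis of `V` over `F`. -/
theorem basis_partition_into_Fq_bases
    {p f m : ℕ} [Fact p.Prime] (hf : 0 < f)
    {K F V : Type} [Field K] [Field F] [Algebra K F]
    [Fintype K] [Fintype F]
    (hcardK : Fintype.card K = p) (hcardF : Fintype.card F = p ^ f)
    (hKF : Module.finrank K F = f)
    [AddCommGroup V] [Module F V] [Module K V] [IsScalarTower K F V]
    (hV : Module.finrank F V = m)
    (b : Fin (f * m) → V)
    (hli : LinearIndependent K b)
    (hsp : Submodule.span K (Set.range b) = ⊤) :
    ∃ σ : Fin (f * m) → Fin f,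
      (∀ t : Fin f, (Finset.univ.filter fun i => σ i = t).card = m) ∧
      (∀ t : Fin f,
        LinearIndependent F (fun i : {i : Fin (f * m) // σ i = t} => b i.1) ∧
        Submodule.span F (Set.range fun i : {i : Fin (f * m) // σ i = t} => b i.1) = ⊤) := by
  classical
  haveI : Module.Finite K V := ⟨hsp ▸ Submodule.fg_span (Set.finite_range b)⟩
  haveI : FiniteDimensional K V := inferInstance
  haveI : FiniteDimensional F V := Module.Finite.of_restrictScalars_finite K F V
  -- the sets of candidate vectors
  set A : Fin (f * m) → Finset (Fin f → V) := fun i => Finset.image (fun t => Pi.single t (b i)) Finset.univ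
    with hA
  -- Rado condition
  have hcond : ∀ J : Finset (Fin (f * m)),
      J.card ≤ finrank F (span F (⋃ j ∈ (J : Set (Fin (f * m))), (A j : Set (Fin f → V)))) := by
    intro J
    set W : Submodule F V := span F (b '' (J : Set (Fin (f * m)))) with hW
    set d : ℕ := finrank F W with hd
    -- step 1 : J.card ≤ f * d  (using K-linear independence)
    have step1 : J.card ≤ f * d := by
      have hbJ : LinearIndependent K (b ∘ (Subtype.val : {j : Fin (f*m) // j ∈ J} → _)) :=
        hli.comp (fun j : {j : Fin (f*m) // j ∈ J} => j.1) Subtype.val_injective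
      have hcard : Fintype.card {j : Fin (f*m) // j ∈ J} = J.card := by
        simp [Fintype.card_coe]
      have heq : Fintype.card {j : Fin (f*m) // j ∈ J}
          = Set.finrank K (Set.range (b ∘ (Subtype.val : {j : Fin (f*m) // j ∈ J} → _))) :=
        linearIndependent_iff_card_eq_finrank_span.mp hbJ
      have hrange : Set.range (b ∘ (Subtype.val : {j : Fin (f*m) // j ∈ J} → _))
          = b '' (J : Set (Fin (f*m))) := by
        rw [Set.range_comp]
        congr 1
        ext j
        simp
      have hle1 : span K (b '' (J : Set (Fin (f*m)))) ≤ W.restrictScalars K := by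
        rw [Submodule.span_le]
        exact (Submodule.subset_span : b '' _ ⊆ (W : Set V))
      have hle2 : Set.finrank K (b '' (J : Set (Fin (f*m)))) ≤ finrank K (W.restrictScalars K) :=
        Submodule.finrank_mono hle1
      have hWK : finrank K (W.restrictScalars K) = finrank K W :=
        ((Submodule.restrictScalarsEquiv K F V W).restrictScalars K).finrank_eq
      have htower : finrank K F * finrank F W = finrank K W :=
        Module.finrank_mul_finrank K F W
      calc J.card = Set.finrank K (b '' (J : Set (Fin (f*m)))) := by
              rw [← hrange, ← heq, hcard]
        _ ≤ finrank K (W.restrictScalars K) := hle2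
        _ = finrank K F * finrank F W := by rw [hWK, ← htower]
        _ = f * d := by rw [hKF]
    -- step 2 : f * d ≤ finrank of the span of the union
    have step2 : f * d ≤ finrank F (span F (⋃ j ∈ (J : Set (Fin (f * m))), (A j : Set (Fin f → V)))) := by
      set U : Set (Fin f → V) := ⋃ j ∈ (J : Set (Fin (f * m))), (A j : Set (Fin f → V)) with hU
      set bW := Module.finBasis F W with hbW
      set w : Fin d → V := fun k => (bW k : V) with hw
      have hwli : LinearIndependent F w := bW.linearIndependent.map' W.subtype W.ker_subtype
      have hmem : ∀ (t : Fin f) (k : Fin d), Pi.single t (w k) ∈ span F U := by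
        intro t k
        have h1 : Pi.single t (w k) ∈ W.map (LinearMap.single F (fun _ : Fin f => V) t) :=
          ⟨w k, (bW k).2, rfl⟩
        refine (Submodule.map_le_iff_le_comap.mpr ?_) h1
        rw [hW, ← Submodule.map_le_iff_le_comap, Submodule.map_span, Submodule.span_le]
        rintro y ⟨v, ⟨j, hj, rfl⟩, rfl⟩
        refine Submodule.subset_span (Set.mem_biUnion hj ?_)
        exact Finset.mem_coe.mpr (Finset.mem_image.mpr ⟨t, Finset.mem_univ t, rfl⟩)
      set g : Fin f × Fin d → span F U := fun tk => ⟨Pi.single tk.1 (w tk.2), hmem tk.1 tk.2⟩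
        with hg
      have hgli : LinearIndependent F g := by
        have hvg : LinearIndependent F ((span F U).subtype ∘ g) := by
          have : ((span F U).subtype ∘ g) = fun tk : Fin f × Fin d => Pi.single tk.1 (w tk.2) :=
            rfl
          rw [this]
          rw [Fintype.linearIndependent_iff]
          intro c hc tk
          have hct := congrFun hc tk.1
          simp only [Finset.sum_apply, Pi.smul_apply, Pi.zero_apply] at hct
          have hone : ∀ i : Fin f × Fin d, c i • (Pi.single i.1 (w i.2) : Fin f → V) tk.1
              = if tk.1 = i.1 then c i • w i.2 else 0 := by
            intro i
            rw [Pi.single_apply]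
            split_ifs <;> simp
          rw [Finset.sum_congr rfl (fun i _ => hone i), Fintype.sum_prod_type] at hct
          have hswap : ∀ t1 : Fin f, (∑ k : Fin d, if tk.1 = t1 then c (t1, k) • w k else 0)
              = if tk.1 = t1 then ∑ k : Fin d, c (t1, k) • w k else 0 := by
            intro t1; split_ifs <;> simp
          rw [Finset.sum_congr rfl (fun t1 _ => hswap t1), Finset.sum_ite_eq] at hct
          simp only [Finset.mem_univ, if_true] at hct
          exact Fintype.linearIndependent_iff.mp hwli (fun k => c (tk.1, k)) hct tk.2
        exact LinearIndependent.of_comp (span F U).subtype hvg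
      have hcardg : Fintype.card (Fin f × Fin d) = f * d := by simp
      have := hgli.fintype_card_le_finrank
      rwa [hcardg] at this
    exact le_trans step1 step2
  -- apply Rado
  obtain ⟨x, hx, hxli⟩ := rado_aux (∑ i, (A i).card) A le_rfl hcond
  have hx' : ∀ i, ∃ t : Fin f, Pi.single t (b i) = x i := by
    intro i
    have := hx i
    rw [hA] at this
    obtain ⟨t, -, ht⟩ := Finset.mem_image.mp this
    exact ⟨t, ht⟩
  choose σ hσ using hx'
  -- each part is linearly independent over F
  have hpartli : ∀ t : Fin f,
      LinearIndependent F (fun i : {i : Fin (f * m) // σ i = t} => b i.1) := by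
    intro t
    have hxcomp : LinearIndependent F (x ∘ (Subtype.val : {i : Fin (f*m) // σ i = t} → _)) :=
      hxli.comp (fun i : {i : Fin (f*m) // σ i = t} => i.1) Subtype.val_injective
    have heq : x ∘ (Subtype.val : {i : Fin (f*m) // σ i = t} → _)
        = (LinearMap.single F (fun _ : Fin f => V) t) ∘ (fun i : {i : Fin (f*m) // σ i = t} => b i.1) := by
      funext i
      simp only [Function.comp_apply]
      rw [← hσ i.1, i.2]
      rfl
    rw [heq] at hxcomp
    exact LinearIndependent.of_comp _ hxcomp
  -- cardinalities
  have hcard_le : ∀ t : Fin f, (Finset.univ.filter fun i => σ i = t).card ≤ m := by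
    intro t
    have h1 := (hpartli t).fintype_card_le_finrank
    rwa [hV, Fintype.card_subtype] at h1
  have hsum : ∑ t : Fin f, (Finset.univ.filter fun i => σ i = t).card = f * m := by
    rw [← Finset.card_eq_sum_card_fiberwise (fun i _ => Finset.mem_univ (σ i))]
    simp
  have hcard : ∀ t : Fin f, (Finset.univ.filter fun i => σ i = t).card = m := by
    by_contra hc
    push_neg at hc
    obtain ⟨t0, ht0⟩ := hc
    have hlt : (Finset.univ.filter fun i => σ i = t0).card < m :=
      lt_of_le_of_ne (hcard_le t0) ht0
    have : ∑ t : Fin f, (Finset.univ.filter fun i => σ i = t).card < ∑ _t : Fin f, m :=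
      Finset.sum_lt_sum (fun t _ => hcard_le t) ⟨t0, Finset.mem_univ t0, hlt⟩
    rw [hsum] at this
    simp only [Finset.sum_const, Finset.card_univ, Fintype.card_fin, smul_eq_mul] at this
    omega
  refine ⟨σ, hcard, fun t => ⟨hpartli t, ?_⟩⟩
  refine (hpartli t).span_eq_top_of_card_eq_finrank' ?_
  rw [Fintype.card_subtype, hcard t, hV]
end

section
/- Let V be a vector space over a field E and let v₁, ..., v_M be nonzero vectors in V. Suppose that for every nonempty subset J ⊆ {1, ..., M}, the cardinality of J is at most k times the dimension over E of the span of {v_j : j ∈ J}. Then {1, ..., M} can be partitioned into k sets A₁, ..., A_k such that {v_i : i ∈ A_j} is linearly independent over E for each j. -/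
open Finset Submodule Function

section RadoHornAux

variable (E : Type) {V : Type} [Field E] [AddCommGroup V] [Module E V] {M k : ℕ}

/-- Span of the vectors indexed by a finset of indices. -/
def rhSp (v : Fin M → V) (J : Finset (Fin M)) : Submodule E V :=
  Submodule.span E (v '' (J : Set (Fin M)))

/-- Linear independence of the subfamily indexed by a finset of indices. -/
def rhInd (v : Fin M → V) (J : Finset (Fin M)) : Prop :=
  LinearIndependent E (fun i : ((J : Set (Fin M))) => v i)

variable {E}
variable {v : Fin M → V} {J K T : Finset (Fin M)} {x y : Fin M}

theorem rhSp_mono (h : J ⊆ K) : rhSp E v J ≤ rhSp E v K :=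
  span_mono (Set.image_mono  (by exact_mod_cast h))

theorem mem_rhSp (h : x ∈ J) : v x ∈ rhSp E v J :=
  subset_span ⟨x, by exact_mod_cast h, rfl⟩

theorem rhSp_insert : rhSp E v (insert x J) = Submodule.span E (insert (v x) (v '' (J : Set (Fin M)))) := by
  rw [rhSp, coe_insert, Set.image_insert_eq]

theorem rhInd_mono (hK : rhInd E v K) (h : J ⊆ K) : rhInd E v J := by
  have hsub : (J : Set (Fin M)) ⊆ (K : Set (Fin M)) := by exact_mod_cast h
  exact hK.comp (Set.inclusion hsub) (Set.inclusion_injective hsub)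

theorem rhInd_empty : rhInd E v ∅ := by
  rw [rhInd, coe_empty]
  exact linearIndependent_empty_type

theorem rhInd_insert (hJ : rhInd E v J) (hx : v x ∉ rhSp E v J) : rhInd E v (insert x J) := by
  have hxJ : x ∉ (J : Set (Fin M)) := fun hmem => hx (mem_rhSp (by exact_mod_cast hmem))
  rw [rhInd, coe_insert]
  exact (linearIndepOn_insert hxJ).2 ⟨hJ, hx⟩

theorem rhInd_card (hJ : rhInd E v J) : J.card = Module.finrank E (rhSp E v J) := by
  classical
  have b := Module.Basis.span hJ
  rw [rhSp, show (v '' (J : Set (Fin M))) = Set.range (fun i : ((J : Set (Fin M))) => v i) from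
    Set.image_eq_range v _]
  rw [Module.finrank_eq_card_basis b]; simp

/-- In the span of an independent family, every vector is spanned by a "support" subset
each of whose members is essential. -/
theorem rhRep (hJ : rhInd E v J) (hx : v x ∈ rhSp E v J) :
    ∃ T : Finset (Fin M), T ⊆ J ∧ v x ∈ rhSp E v T ∧
      ∀ y ∈ T, v x ∉ rhSp E v (J.erase y) := by
  classical
  rw [rhSp] at hx
  obtain ⟨l, hls, hlx⟩ := (Finsupp.mem_span_image_iff_linearCombination E).1 hx
  have hsupp : (l.support : Set (Fin M)) ⊆ (J : Set (Fin M)) := (Finsupp.mem_supported E l).mp hls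
  refine ⟨l.support, Finset.coe_subset.1 hsupp, ?_, ?_⟩
  · rw [rhSp]
    exact (Finsupp.mem_span_image_iff_linearCombination E).2
      ⟨l, (Finsupp.mem_supported E l).2 (subset_refl _), hlx⟩
  · intro y hy hcon
    rw [rhSp] at hcon
    obtain ⟨l', hl's, hl'x⟩ := (Finsupp.mem_span_image_iff_linearCombination E).1 hcon
    have hl'J : l' ∈ Finsupp.supported E E (J : Set (Fin M)) :=
      Finsupp.supported_mono (Finset.coe_subset.2 (Finset.erase_subset y J)) hl's
    have hdiff : l - l' ∈ Finsupp.supported E E (J : Set (Fin M)) := sub_mem hls hl'J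
    have hzero : Finsupp.linearCombination E v (l - l') = 0 := by
      rw [map_sub, hlx, hl'x, sub_self]
    have hli : LinearIndependent E (fun i : ((J : Set (Fin M))) => v i) := hJ
    have heq : l - l' = 0 := linearIndepOn_iff.mp hli (l - l') hdiff hzero
    have h1 : l y ≠ 0 := Finsupp.mem_support_iff.mp hy
    have h2 : l' y = 0 := by
      by_contra h2
      have hmem : y ∈ l'.support := Finsupp.mem_support_iff.2 h2
      have := (Finsupp.mem_supported E l').mp hl's hmem
      simp at this
    apply h1
    have := congrArg (fun f : Fin M →₀ E => f y) heq
    simpa [h2, sub_eq_zero] using this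

end RadoHornAux

section RadoHornMain

variable {E V : Type} [Field E] [AddCommGroup V] [Module E V] {M k : ℕ}

/-- The class of index `t` in the partial coloring `σ` restricted to `S`. -/
def rhCls (σ : Fin M → Fin k) (S : Finset (Fin M)) (t : Fin k) : Finset (Fin M) :=
  S.filter (fun i => σ i = t)

variable (E) in
/-- The exchange digraph: an edge from `x` to `y` means that `y` belongs to its class,
`x` does not, `v x` is in the span of the class of `y`, and `y` is essential for this. -/
def rhEdge (v : Fin M → V) (σ : Fin M → Fin k) (S : Finset (Fin M)) (x y : Fin M) : Prop :=
  y ∈ S ∧ x ∉ rhCls σ S (σ y) ∧ v x ∈ rhSp E v (rhCls σ S (σ y)) ∧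
    v x ∉ rhSp E v ((rhCls σ S (σ y)).erase y)

variable (E) in
/-- `x` is free if some class does not span it: then `x` can be added to that class. -/
def rhFree (v : Fin M → V) (σ : Fin M → Fin k) (S : Finset (Fin M)) (x : Fin M) : Prop :=
  ∃ t, v x ∉ rhSp E v (rhCls σ S t)

variable {v : Fin M → V} {σ : Fin M → Fin k} {S : Finset (Fin M)} {x e : Fin M} {t u : Fin k}

theorem mem_rhCls_iff : x ∈ rhCls σ S t ↔ x ∈ S ∧ σ x = t := Finset.mem_filter

theorem rhCls_subset : rhCls σ S t ⊆ S := Finset.filter_subset _ _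

theorem rhCls_update_self (hx : x ∈ S) :
    rhCls (Function.update σ x u) S u = insert x ((rhCls σ S u).erase x) := by
  ext i
  simp only [rhCls, Finset.mem_filter, Finset.mem_insert, Finset.mem_erase,
    Function.update_apply]
  by_cases hix : i = x
  · subst hix; simp [hx]
  · simp [hix]
theorem rhCls_update_ne (h : t ≠ u) :
    rhCls (Function.update σ x u) S t = (rhCls σ S t).erase x := by
  ext i
  simp only [rhCls, Finset.mem_filter, Finset.mem_erase, Function.update_apply]
  by_cases hix : i = x
  · subst hix; simp [h.symm]
  · simp [hix]

theorem rhCls_not_mem (h : σ x ≠ t) : x ∉ rhCls σ S t := by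
  simp [mem_rhCls_iff, h]

theorem rhCls_insert_erase (he : e ∉ S) : (rhCls σ (insert e S) t).erase e = rhCls σ S t := by
  ext i
  simp only [rhCls, Finset.mem_erase, Finset.mem_filter, Finset.mem_insert]
  constructor
  · rintro ⟨hne, h1 | h2, h3⟩
    · exact absurd h1 hne
    · exact ⟨h2, h3⟩
  · rintro ⟨h1, h2⟩
    exact ⟨fun hie => he (hie ▸ h1), Or.inr h1, h2⟩

theorem rhCls_update_insert_self (he : e ∉ S) :
    rhCls (Function.update σ e u) (insert e S) u = insert e (rhCls σ S u) := by
  rw [rhCls_update_self (Finset.mem_insert_self e S), rhCls_insert_erase he]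

theorem rhCls_update_insert_ne (he : e ∉ S) (h : t ≠ u) :
    rhCls (Function.update σ e u) (insert e S) t = rhCls σ S t := by
  rw [rhCls_update_ne h, rhCls_insert_erase he]

theorem rhAug (v : Fin M → V) (S : Finset (Fin M)) (e : Fin M) (he : e ∉ S) (n : ℕ) :
    ∀ σ : Fin M → Fin k, ∀ c : ℕ → Fin M,
    (∀ t, rhInd E v (rhCls σ S t)) → c 0 = e →
    (∀ a, a < n → rhEdge E v σ S (c a) (c (a + 1))) → rhFree E v σ S (c n) →
    ∃ σ' : Fin M → Fin k, ∀ t, rhInd E v (rhCls σ' (insert e S) t) := by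
  induction n using Nat.strong_induction_on with
  | _ n IH =>
  intro σ c hg hc0 hedge hfr
  by_cases h0 : ∃ a, a < n ∧ rhFree E v σ S (c a)
  · obtain ⟨a, ha, hfa⟩ := h0
    exact IH a ha σ c hg hc0 (fun i hi => hedge i (by omega)) hfa
  push_neg at h0
  by_cases hdup : ∃ a b, a < b ∧ b ≤ n ∧ c a = c b
  · obtain ⟨a, b, hab, hbn, hcab⟩ := hdup
    have hbn' : b < n := by
      rcases eq_or_lt_of_le hbn with heq | h
      · subst heq
        exact absurd (show rhFree E v σ S (c a) by rw [hcab]; exact hfr) (h0 a hab)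
      · exact h
    set d := b - a with hd
    refine IH (n - d) (by omega) σ (fun i => if i ≤ a then c i else c (i + d)) hg ?_ ?_ ?_
    · simp [hc0]
    · intro i hi
      by_cases hi1 : i + 1 ≤ a
      · have hia : i ≤ a := by omega
        simp only [if_pos hi1, if_pos hia]
        exact hedge i (by omega)
      · by_cases hia : i ≤ a
        · have hie : i = a := by omega
          subst hie
          simp only [if_pos hia, if_neg hi1]
          have h1 : i + 1 + d = b + 1 := by omega
          rw [h1, hcab]
          exact hedge b hbn'
        · simp only [if_neg hia, if_neg (show ¬ i + 1 ≤ a by omega)]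
          have h1 : i + 1 + d = (i + d) + 1 := by omega
          rw [h1]
          exact hedge (i + d) (by omega)
    · have h1 : ¬ (n - d ≤ a) := by omega
      simp only [if_neg h1]
      have h2 : n - d + d = n := by omega
      rw [h2]
      exact hfr
  by_cases hsc : ∃ a b, a + 1 < b ∧ b ≤ n ∧ rhEdge E v σ S (c a) (c b)
  · obtain ⟨a, b, hab, hbn, heab⟩ := hsc
    set d := b - (a + 1) with hd
    refine IH (n - d) (by omega) σ (fun i => if i ≤ a then c i else c (i + d)) hg ?_ ?_ ?_
    · simp [hc0]
    · intro i hi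
      by_cases hi1 : i + 1 ≤ a
      · have hia : i ≤ a := by omega
        simp only [if_pos hi1, if_pos hia]
        exact hedge i (by omega)
      · by_cases hia : i ≤ a
        · have hie : i = a := by omega
          subst hie
          simp only [if_pos hia, if_neg hi1]
          have h1 : i + 1 + d = b := by omega
          rw [h1]
          exact heab
        · simp only [if_neg hia, if_neg (show ¬ i + 1 ≤ a by omega)]
          have h1 : i + 1 + d = (i + d) + 1 := by omega
          rw [h1]
          exact hedge (i + d) (by omega)
    · have h1 : ¬ (n - d ≤ a) := by omega
      simp only [if_neg h1]
      have h2 : n - d + d = n := by omega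
      rw [h2]
      exact hfr
  push_neg at hdup hsc
  rcases Nat.eq_zero_or_pos n with rfl | hn
  · obtain ⟨t', hts⟩ := hfr
    rw [hc0] at hts
    refine ⟨Function.update σ e t', fun t => ?_⟩
    by_cases ht : t = t'
    · subst ht
      rw [rhCls_update_insert_self he]
      exact rhInd_insert (hg t) hts
    · rw [rhCls_update_insert_ne he ht]
      exact hg t
  · obtain ⟨m, rfl⟩ : ∃ m, n = m + 1 := ⟨n - 1, by omega⟩
    have hnf : ∀ a, a < m + 1 → ∀ t, v (c a) ∈ rhSp E v (rhCls σ S t) := by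
      intro a ha t
      by_contra hcon
      exact h0 a ha ⟨t, hcon⟩
    obtain ⟨hcnS, hcn_notmem, hcn_spmem, hcn_er⟩ := hedge m (by omega)
    set tn := σ (c (m + 1)) with htn
    obtain ⟨ts, hts⟩ := hfr
    have htsne : ts ≠ tn := by
      intro hh
      apply hts
      rw [hh]
      exact mem_rhSp (mem_rhCls_iff.2 ⟨hcnS, rfl⟩)
    set σ' := Function.update σ (c (m + 1)) ts with hσ'
    have hclsts : rhCls σ' S ts = insert (c (m + 1)) (rhCls σ S ts) := by
      rw [hσ', rhCls_update_self hcnS,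
        Finset.erase_eq_of_notMem (rhCls_not_mem (fun hh => htsne (htn.trans hh).symm))]
    have hclstn : rhCls σ' S tn = (rhCls σ S tn).erase (c (m + 1)) :=
      rhCls_update_ne (fun hh => htsne hh.symm)
    have hclso : ∀ t, t ≠ ts → t ≠ tn → rhCls σ' S t = rhCls σ S t := by
      intro t h1 h2
      rw [hσ', rhCls_update_ne h1, Finset.erase_eq_of_notMem (rhCls_not_mem (fun hh => h2 hh.symm))]
    have hg' : ∀ t, rhInd E v (rhCls σ' S t) := by
      intro t
      by_cases h1 : t = ts
      · subst h1
        rw [hclsts]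
        exact rhInd_insert (hg t) hts
      · rw [hσ', rhCls_update_ne h1]
        exact rhInd_mono (hg t) (Finset.erase_subset _ _)
    apply IH m (by omega) σ' c hg' hc0
    · intro a ha
      obtain ⟨hyS, hxnot, hxsp, hxer⟩ := hedge a (by omega)
      have hane : c (a + 1) ≠ c (m + 1) := hdup (a + 1) (m + 1) (by omega) (le_refl _)
      have hσeq : σ' (c (a + 1)) = σ (c (a + 1)) := Function.update_of_ne hane _ _
      rw [rhEdge, hσeq]
      set t := σ (c (a + 1)) with htdef
      refine ⟨hyS, ?_, ?_, ?_⟩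
      · by_cases h1 : t = ts
        · rw [h1, hclsts]
          intro hmem
          rcases Finset.mem_insert.1 hmem with h2 | h2
          · exact hdup a (m + 1) (by omega) (le_refl _) h2
          · exact hxnot (h1 ▸ h2)
        · rw [hσ', rhCls_update_ne h1]
          exact fun hmem => hxnot (Finset.erase_subset _ _ hmem)
      · by_cases h1 : t = ts
        · rw [h1, hclsts]
          exact rhSp_mono (Finset.subset_insert _ _) (h1 ▸ hxsp)
        · by_cases h2 : t = tn
          · rw [h2, hclstn]
            by_contra hcon
            refine hsc a (m + 1) (by omega) (le_refl _) ?_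
            rw [← h2] at hcon
            rw [rhEdge, ← htn, ← h2]
            exact ⟨hcnS, hxnot, hxsp, hcon⟩
          · rw [hclso t h1 h2]
            exact hxsp
      · by_cases h1 : t = ts
        · rw [h1, hclsts, Finset.erase_insert_of_ne hane.symm]
          intro hcon
          set B := (rhCls σ S ts).erase (c (a + 1)) with hB
          rw [rhSp_insert] at hcon
          have hxerB : v (c a) ∉ Submodule.span E (v '' (B : Set (Fin M))) := by
            have := h1 ▸ hxer
            exact this
          have hexch := mem_span_insert_exchange hcon hxerB
          apply hts
          have hle : Submodule.span E (insert (v (c a)) (v '' (B : Set (Fin M)))) ≤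
              rhSp E v (rhCls σ S ts) := by
            rw [Submodule.span_le]
            rintro w hw
            rcases Set.mem_insert_iff.1 hw with rfl | hw2
            · exact hnf a (by omega) ts
            · exact rhSp_mono (Finset.erase_subset _ _) (Submodule.subset_span hw2)
          exact hle hexch
        · by_cases h2 : t = tn
          · rw [h2, hclstn]
            intro hcon
            apply h2 ▸ hxer
            refine rhSp_mono ?_ hcon
            exact Finset.erase_subset_erase _ (Finset.erase_subset _ _)
          · rw [hclso t h1 h2]
            exact hxer
    · exact ⟨tn, hclstn ▸ hcn_er⟩

theorem rhChain_of_rtg {α : Type*} {r : α → α → Prop} {a b : α}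
    (h : Relation.ReflTransGen r a b) :
    ∃ n, ∃ c : ℕ → α, c 0 = a ∧ c n = b ∧ ∀ i, i < n → r (c i) (c (i + 1)) := by
  induction h with
  | refl => exact ⟨0, fun _ => a, rfl, rfl, by omega⟩
  | @tail b' c' hab hr ih =>
    obtain ⟨n, c, h0, hn, hch⟩ := ih
    refine ⟨n + 1, fun i => if i ≤ n then c i else c', ?_, ?_, ?_⟩
    · simp [h0]
    · simp
    · intro i hi
      by_cases h1 : i + 1 ≤ n
      · simp only [if_pos h1, if_pos (show i ≤ n by omega)]
        exact hch i (by omega)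
      · have hie : i = n := by omega
        subst hie
        simp only [if_pos (le_refl i), if_neg h1]
        exact hn ▸ hr

/-- The failure analysis: if no free vertex is reachable from `e`, then the reachable set
violates the counting hypothesis. -/
theorem rhNoPath (v : Fin M → V) (σ : Fin M → Fin k) (S : Finset (Fin M)) (e : Fin M)
    (he : e ∉ S) (hg : ∀ t, rhInd E v (rhCls σ S t))
    (hnf : ∀ x, Relation.ReflTransGen (rhEdge E v σ S) e x → ¬ rhFree E v σ S x)
    (h : ∀ J : Finset (Fin M), J.Nonempty →
      J.card ≤ k * Module.finrank E (Submodule.span E (v '' (J : Set (Fin M))))) :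
    False := by
  classical
  set R : Finset (Fin M) :=
    Finset.univ.filter (fun x => Relation.ReflTransGen (rhEdge E v σ S) e x) with hR
  have hmemR : ∀ x, x ∈ R ↔ Relation.ReflTransGen (rhEdge E v σ S) e x := by
    intro x; simp [hR]
  have heR : e ∈ R := (hmemR e).2 Relation.ReflTransGen.refl
  have hclosed : ∀ x ∈ R, ∀ y, rhEdge E v σ S x y → y ∈ R := by
    intro x hx y hxy
    exact (hmemR y).2 (Relation.ReflTransGen.tail ((hmemR x).1 hx) hxy)
  have hnonfree : ∀ x ∈ R, ∀ t, v x ∈ rhSp E v (rhCls σ S t) := by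
    intro x hx t
    by_contra hcon
    exact hnf x ((hmemR x).1 hx) ⟨t, hcon⟩
  have hkey : ∀ x ∈ R, ∀ t, v x ∈ rhSp E v (rhCls σ S t ∩ R) := by
    intro x hx t
    by_cases hxc : x ∈ rhCls σ S t
    · exact mem_rhSp (Finset.mem_inter.2 ⟨hxc, hx⟩)
    · obtain ⟨T, hTJ, hxT, hT⟩ := rhRep (hg t) (hnonfree x hx t)
      refine rhSp_mono (fun y hy => Finset.mem_inter.2 ⟨hTJ hy, ?_⟩) hxT
      have hyt : σ y = t := (mem_rhCls_iff.1 (hTJ hy)).2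
      refine hclosed x hx y ?_
      rw [rhEdge, hyt]
      exact ⟨rhCls_subset (hTJ hy), hxc, hnonfree x hx t, hT y hy⟩
  have hW : ∀ t, rhSp E v (rhCls σ S t ∩ R) = rhSp E v R := by
    intro t
    refine le_antisymm (rhSp_mono Finset.inter_subset_right) ?_
    rw [rhSp, Submodule.span_le]
    rintro w ⟨x, hx, rfl⟩
    exact hkey x (by exact_mod_cast hx) t
  have hcard : ∀ t, (rhCls σ S t ∩ R).card = Module.finrank E (rhSp E v R) := by
    intro t
    rw [← hW t]
    exact rhInd_card (rhInd_mono (hg t) Finset.inter_subset_left)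
  have hRe : R.erase e ⊆ S := by
    intro x hx
    obtain ⟨hne, hxR⟩ := Finset.mem_erase.1 hx
    rcases Relation.ReflTransGen.cases_tail ((hmemR x).1 hxR) with heq | ⟨w, _, hw⟩
    · exact absurd heq hne
    · exact hw.1
  have hfib : ∀ t, (R.erase e).filter (fun x => σ x = t) = rhCls σ S t ∩ R := by
    intro t
    ext x
    simp only [Finset.mem_filter, Finset.mem_erase, Finset.mem_inter, mem_rhCls_iff]
    constructor
    · rintro ⟨⟨hne, hxR⟩, hxt⟩
      exact ⟨⟨hRe (Finset.mem_erase.2 ⟨hne, hxR⟩), hxt⟩, hxR⟩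
    · rintro ⟨⟨hxS, hxt⟩, hxR⟩
      exact ⟨⟨fun hh => he (hh ▸ hxS), hxR⟩, hxt⟩
  have hsum : (R.erase e).card = k * Module.finrank E (rhSp E v R) := by
    rw [Finset.card_eq_sum_card_fiberwise (f := σ) (t := Finset.univ) (fun x _ => Finset.mem_univ _)]
    rw [Finset.sum_congr rfl (fun t _ => (hfib t).trans (rfl) ▸ (hcard t))]
    simp [Finset.card_univ, mul_comm]
  have hRcard : R.card = 1 + k * Module.finrank E (rhSp E v R) := by
    rw [← Finset.card_erase_add_one heR] at *
    omega
  have hcontra := h R ⟨e, heR⟩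
  rw [show Submodule.span E (v '' (R : Set (Fin M))) = rhSp E v R from rfl] at hcontra
  omega

theorem rhExists (v : Fin M → V) (hk : 0 < k)
    (h : ∀ J : Finset (Fin M), J.Nonempty →
      J.card ≤ k * Module.finrank E (Submodule.span E (v '' (J : Set (Fin M))))) :
    ∀ S : Finset (Fin M), ∃ σ : Fin M → Fin k, ∀ t, rhInd E v (rhCls σ S t) := by
  classical
  intro S
  induction S using Finset.induction_on with
  | empty =>
    refine ⟨fun _ => ⟨0, hk⟩, fun t => ?_⟩
    rw [show rhCls (fun _ : Fin M => (⟨0, hk⟩ : Fin k)) (∅ : Finset (Fin M)) t = ∅ from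
      Finset.filter_empty _]
    exact rhInd_empty
  | @insert e S he IH =>
    obtain ⟨σ, hg⟩ := IH
    by_cases hreach : ∃ x, Relation.ReflTransGen (rhEdge E v σ S) e x ∧ rhFree E v σ S x
    · obtain ⟨x, hpath, hfree⟩ := hreach
      obtain ⟨n, c, hc0, hcn, hch⟩ := rhChain_of_rtg hpath
      exact rhAug v S e he n σ c hg hc0 hch (hcn ▸ hfree)
    · exfalso
      push_neg at hreach
      exact rhNoPath v σ S e he hg hreach h

end RadoHornMain

/-- The Rado–Horn theorem: if `v₁, …, v_M` are nonzero vectors in a vector space `V` over a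
field `E` such that every nonempty subset `J ⊆ {1, …, M}` satisfies
`#J ≤ k · dim_E Span{v_j : j ∈ J}`, then `{1, …, M}` can be partitioned into `k` sets on
each of which the corresponding vectors are linearly independent. -/
theorem rado_horn
    {E V : Type} [Field E] [AddCommGroup V] [Module E V]
    (M k : ℕ) (hk : 0 < k) (v : Fin M → V) (hv : ∀ i, v i ≠ 0)
    (h : ∀ J : Finset (Fin M), J.Nonempty →
      J.card ≤ k * Module.finrank E (Submodule.span E (v '' (J : Set (Fin M))))) :
    ∃ σ : Fin M → Fin k,
      ∀ t : Fin k, LinearIndependent E (fun i : {i : Fin M // σ i = t} => v i.1) := by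
  obtain ⟨σ, hσ⟩ := rhExists v hk h Finset.univ
  refine ⟨σ, fun t => ?_⟩
  have hli := hσ t
  rw [rhInd] at hli
  have hf : ∀ i : {i : Fin M // σ i = t},
      (i : Fin M) ∈ ((rhCls σ Finset.univ t : Finset (Fin M)) : Set (Fin M)) := by
    intro i
    simp [rhCls, i.2]
  set f : {i : Fin M // σ i = t} → ((rhCls σ Finset.univ t : Finset (Fin M)) : Set (Fin M)) :=
    fun i => ⟨i.1, hf i⟩ with hfdef
  have hinj : Function.Injective f := by
    intro a b hab
    apply Subtype.ext
    have h2 : (f a).1 = (f b).1 := congrArg Subtype.val hab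
    exact h2
  exact hli.comp f hinj
end

section
/- Let f(T) ∈ ℤ[T] be an irreducible monic cubic polynomial with discriminant D, and let p be an odd prime not dividing D. Then the number of roots of f modulo p is 0 or 3 if (D/p) = 1, and is exactly 1 if (D/p) = -1. -/
open Polynomial


lemma frobFixedMem {p : ℕ} [Fact p.Prime] {K : Type*} [Field K]
    (φ : ZMod p →+* K) {w : K} (hw : w ^ p = w) : w ∈ Set.range φ := by
  classical
  have hprime : p.Prime := Fact.out
  set P : K[X] := X ^ p - X with hPdef
  have hdeg : P.natDegree = p := by
    have h1 : ((X : K[X])).natDegree < ((X : K[X]) ^ p).natDegree := by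
      rw [natDegree_X_pow, natDegree_X]
      exact hprime.one_lt
    simpa [hPdef, natDegree_X_pow] using natDegree_sub_eq_left_of_natDegree_lt h1
  have hP0 : P ≠ 0 := by
    intro h
    rw [h, natDegree_zero] at hdeg
    exact hprime.ne_zero hdeg.symm
  have hmem : ∀ u : ZMod p, φ u ∈ P.roots := by
    intro u
    rw [mem_roots hP0]
    simp [hPdef, IsRoot, ← map_pow, ZMod.pow_card]
  have hw' : w ∈ P.roots.toFinset := by
    rw [Multiset.mem_toFinset, mem_roots hP0]
    simp [hPdef, IsRoot, hw]
  have hsub : (Finset.univ.image φ) ⊆ P.roots.toFinset := by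
    intro t ht
    rcases Finset.mem_image.mp ht with ⟨u, _, rfl⟩
    exact Multiset.mem_toFinset.mpr (hmem u)
  have hcard1 : (Finset.univ.image φ).card = p := by
    rw [Finset.card_image_of_injective _ φ.injective, Finset.card_univ, ZMod.card]
  have hcard2 : P.roots.toFinset.card ≤ p :=
    le_trans (le_trans (Multiset.toFinset_card_le _) (P.card_roots')) (le_of_eq hdeg)
  have heq : Finset.univ.image φ = P.roots.toFinset :=
    Finset.eq_of_subset_of_card_le hsub (by rw [hcard1]; exact hcard2)
  rw [← heq] at hw'
  rcases Finset.mem_image.mp hw' with ⟨u, _, hu⟩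
  exact ⟨u, hu⟩

lemma cubeFrob {K : Type*} [CommRing K] {p : ℕ} [Fact p.Prime] [CharP K p]
    {A B C x : K} (hA : A ^ p = A) (hB : B ^ p = B) (hC : C ^ p = C)
    (h : x ^ 3 + A * x ^ 2 + B * x + C = 0) :
    (x ^ p) ^ 3 + A * (x ^ p) ^ 2 + B * x ^ p + C = 0 := by
  have h0 : (x ^ 3 + A * x ^ 2 + B * x + C) ^ p = 0 := by
    rw [h]
    exact zero_pow (Fact.out : p.Prime).ne_zero
  calc (x ^ p) ^ 3 + A * (x ^ p) ^ 2 + B * x ^ p + C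
      = (x ^ 3) ^ p + A ^ p * (x ^ 2) ^ p + B ^ p * x ^ p + C ^ p := by
        rw [hA, hB, hC, pow_right_comm x p 3, pow_right_comm x p 2]
    _ = (x ^ 3 + A * x ^ 2 + B * x + C) ^ p := by
        rw [add_pow_char, add_pow_char, add_pow_char, mul_pow, mul_pow]
    _ = 0 := h0

lemma deltaFixed {K : Type*} [Field K] {p : ℕ} [Fact p.Prime] [CharP K p]
    {x y z : K}
    (hinj : ∀ w w' : K, w ^ p = w' ^ p → w = w')
    (hxx : x ^ p ≠ x) (hyy : y ^ p ≠ y) (hzz : z ^ p ≠ z)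
    (hx : x ^ p = x ∨ x ^ p = y ∨ x ^ p = z)
    (hy : y ^ p = x ∨ y ^ p = y ∨ y ^ p = z)
    (hz : z ^ p = x ∨ z ^ p = y ∨ z ^ p = z)
    (hxy : x ≠ y) (hxz : x ≠ z) (hyz : y ≠ z) :
    ((x - y) * (x - z) * (y - z)) ^ p = (x - y) * (x - z) * (y - z) := by
  have expand : ((x - y) * (x - z) * (y - z)) ^ p
      = (x ^ p - y ^ p) * (x ^ p - z ^ p) * (y ^ p - z ^ p) := by
    rw [mul_pow, mul_pow, sub_pow_char, sub_pow_char, sub_pow_char]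
  rcases hx with h1 | h1 | h1
  · exact absurd h1 hxx
  · rcases hy with h2 | h2 | h2
    · rcases hz with h3 | h3 | h3
      · exact absurd (hinj z y (h3.trans h2.symm)) (fun h => hyz h.symm)
      · exact absurd (hinj z x (h3.trans h1.symm)) (fun h => hxz h.symm)
      · exact absurd h3 hzz
    · exact absurd h2 hyy
    · -- x^p = y, y^p = z, so z^p = x
      have h3 : z ^ p = x := by
        rcases hz with h3 | h3 | h3
        · exact h3
        · exact absurd (hinj z x (h3.trans h1.symm)) (fun h => hxz h.symm)
        · exact absurd h3 hzz
      rw [expand, h1, h2, h3]; ring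
  · -- x^p = z
    have h2 : y ^ p = x := by
      rcases hy with h2 | h2 | h2
      · exact h2
      · exact absurd h2 hyy
      · exact absurd (hinj y x (h2.trans h1.symm)) (fun h => hxy h.symm)
    have h3 : z ^ p = y := by
      rcases hz with h3 | h3 | h3
      · exact absurd (hinj z y (h3.trans h2.symm)) (fun h => hyz h.symm)
      · exact h3
      · exact absurd h3 hzz
    rw [expand, h1, h2, h3]; ring


lemma notSquareAux {F K : Type*} [Field F] [Field K] (φ : F →+* K)
    (h2 : (2 : K) ≠ 0) {x y z : K} {DF : F}
    (hDK : φ DF = ((x - y) * (x - z) * (y - z)) ^ 2)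
    (hx : x ∈ Set.range φ) (hy : y ∉ Set.range φ)
    (hxy : x ≠ y) (hxz : x ≠ z)
    (hs1 : x + y + z ∈ Set.range φ)
    (hs2 : x * y + x * z + y * z ∈ Set.range φ) :
    ¬ IsSquare DF := by
  rintro ⟨e, he⟩
  have hδr : (x - y) * (x - z) * (y - z) ∈ Set.range φ := by
    have h1 : ((x - y) * (x - z) * (y - z) - φ e) *
        ((x - y) * (x - z) * (y - z) + φ e) = 0 := by
      have h2' : φ DF = φ e * φ e := by rw [he, map_mul]
      linear_combination hDK.symm.trans h2'
    rcases mul_eq_zero.mp h1 with h | h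
    · exact ⟨e, (sub_eq_zero.mp h).symm⟩
    · exact ⟨-e, by rw [map_neg]; exact (add_eq_zero_iff_eq_neg.mp h).symm⟩
  obtain ⟨d, hd⟩ := hδr
  obtain ⟨u, hu⟩ := hx
  obtain ⟨s1, h1⟩ := hs1
  obtain ⟨s2, hS2⟩ := hs2
  have hv1 : φ (s1 - u) = y + z := by rw [map_sub, h1, hu]; ring
  have hv2 : φ (s2 - u * (s1 - u)) = y * z := by
    rw [map_sub, map_mul, hS2, hu, hv1]; ring
  set q : F := u ^ 2 - u * (s1 - u) + (s2 - u * (s1 - u)) with hqdef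
  have hq : φ q = (x - y) * (x - z) := by
    rw [hqdef, map_add, map_sub, map_mul, map_pow, hu, hv1, hv2]; ring
  have hqne : q ≠ 0 := by
    intro h0
    have hz0 : (x - y) * (x - z) = 0 := by rw [← hq, h0, map_zero]
    rcases mul_eq_zero.mp hz0 with h' | h'
    · exact hxy (sub_eq_zero.mp h')
    · exact hxz (sub_eq_zero.mp h')
  have hqK : φ q ≠ 0 := by
    rw [Ne, _root_.map_eq_zero]; exact hqne
  have hyz2 : φ (d / q) = y - z := by
    have hde : φ d = (y - z) * φ q := by rw [hd, hq]; ring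
    rw [map_div₀, hde, mul_div_assoc, div_self hqK, mul_one]
  refine hy ⟨((s1 - u) + d / q) / 2, ?_⟩
  rw [map_div₀, map_add, hv1, hyz2, map_ofNat]
  rw [div_eq_iff h2]; ring

/-- Let `f(T) = T³ + aT² + bT + c ∈ ℤ[T]` be irreducible (monic cubic) with discriminant
`D = 18abc − 4a³c + a²b² − 4b³ − 27c²`, and let `p` be an odd prime not dividing `D`.
Then the number of roots of `f` modulo `p` is `0` or `3` if `(D/p) = 1`,
and is exactly `1` if `(D/p) = -1`. -/
theorem cubic_root_count_via_legendre
    {p : ℕ} [Fact p.Prime] (hp : p ≠ 2)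
    (a b c : ℤ)
    (hirr : Irreducible ((X : Polynomial ℤ) ^ 3 + C a * X ^ 2 + C b * X + C c))
    (D : ℤ) (hD : D = 18 * a * b * c - 4 * a ^ 3 * c + a ^ 2 * b ^ 2 - 4 * b ^ 3 - 27 * c ^ 2)
    (hpD : ¬ (p : ℤ) ∣ D)
    (N : ℕ)
    (hN : N = (Finset.univ.filter fun x : ZMod p =>
        x ^ 3 + (a : ZMod p) * x ^ 2 + (b : ZMod p) * x + (c : ZMod p) = 0).card) :
    (legendreSym p D = 1 → N = 0 ∨ N = 3) ∧ (legendreSym p D = -1 → N = 1) := by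
  classical
  have hprime : p.Prime := Fact.out
  have hDF : ((D : ZMod p)) ≠ 0 := by
    rw [Ne, ZMod.intCast_zmod_eq_zero_iff_dvd]
    exact hpD
  set P : Cubic (ZMod p) := ⟨1, (a : ZMod p), (b : ZMod p), (c : ZMod p)⟩ with hPdef
  have ha1 : P.a ≠ 0 := one_ne_zero
  have hdisc : P.discr = ((D : ℤ) : ZMod p) := by
    rw [hD]
    push_cast
    simp only [hPdef, Cubic.discr]
    ring
  set K := P.toPoly.SplittingField with hKdef
  set φ : ZMod p →+* K := algebraMap (ZMod p) K with hφdef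
  haveI : CharP K p := charP_of_injective_algebraMap φ.injective p
  have hsplits : Splits (P.toPoly.map φ) := SplittingField.splits P.toPoly
  obtain ⟨x, y, z, h3⟩ := (Cubic.splits_iff_roots_eq_three ha1).mp hsplits
  have h0 : (Cubic.map φ P).toPoly ≠ 0 := by
    apply Cubic.ne_zero_of_a_ne_zero
    simp [Cubic.map, hPdef]
  have hrootK : ∀ w : K, (w = x ∨ w = y ∨ w = z) ↔
      w ^ 3 + φ (a : ZMod p) * w ^ 2 + φ (b : ZMod p) * w + φ (c : ZMod p) = 0 := by
    intro w
    have h := Cubic.mem_roots_iff h0 w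
    rw [h3] at h
    simpa [Cubic.map, hPdef, Multiset.mem_cons, Multiset.mem_singleton] using h
  -- Vieta
  have hb3 := Cubic.b_eq_three_roots ha1 h3
  have hc3 := Cubic.c_eq_three_roots ha1 h3
  simp only [hPdef, map_one, one_mul] at hb3 hc3
  have hr1 : x + y + z ∈ Set.range φ := ⟨-(a : ZMod p), by rw [map_neg, hb3]; ring⟩
  have hr2 : x * y + x * z + y * z ∈ Set.range φ := ⟨(b : ZMod p), hc3⟩
  -- discriminant = δ²
  have hdq := Cubic.discr_eq_prod_three_roots ha1 h3
  have hPa1 : φ P.a = 1 := by simp [hPdef]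
  have hdK : φ ((D : ℤ) : ZMod p) = ((x - y) * (x - z) * (y - z)) ^ 2 := by
    rw [← hdisc, hdq, hPa1]; ring
  have hδ0 : (x - y) * (x - z) * (y - z) ≠ 0 := by
    intro h
    apply hDF
    have : φ ((D : ℤ) : ZMod p) = 0 := by rw [hdK, h]; ring
    exact (_root_.map_eq_zero φ).mp this
  have hxy : x ≠ y := fun h => hδ0 (by rw [h]; ring)
  have hxz : x ≠ z := fun h => hδ0 (by rw [h]; ring)
  have hyz : y ≠ z := fun h => hδ0 (by rw [h]; ring)
  -- counting
  have hNcard : N = (({x, y, z} : Finset K).filter (· ∈ Set.range φ)).card := by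
    rw [hN, ← Finset.card_image_of_injective _ φ.injective]
    congr 1
    ext w
    simp only [Finset.mem_image, Finset.mem_filter, Finset.mem_insert, Finset.mem_singleton,
      Finset.mem_univ, true_and]
    constructor
    · rintro ⟨u, hu, rfl⟩
      constructor
      · apply (hrootK (φ u)).mpr
        have h' : φ (u ^ 3 + (a : ZMod p) * u ^ 2 + (b : ZMod p) * u + (c : ZMod p)) = 0 := by
          rw [hu, map_zero]
        simpa [map_add, map_mul, map_pow] using h'
      · exact ⟨u, rfl⟩
    · rintro ⟨hmem, u, rfl⟩
      refine ⟨u, ?_, rfl⟩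
      have heq := (hrootK (φ u)).mp hmem
      have h' : φ (u ^ 3 + (a : ZMod p) * u ^ 2 + (b : ZMod p) * u + (c : ZMod p)) = 0 := by
        simpa [map_add, map_mul, map_pow] using heq
      exact (_root_.map_eq_zero φ).mp h'
  have h2K : (2 : K) ≠ 0 := by
    have h2n : ((2 : ℕ) : K) ≠ 0 := by
      rw [Ne, CharP.cast_eq_zero_iff K p]
      intro hdvd
      exact hp ((Nat.prime_dvd_prime_iff_eq hprime Nat.prime_two).mp hdvd)
    simpa using h2n
  suffices hkey : (IsSquare ((D : ℤ) : ZMod p) → N = 0 ∨ N = 3) ∧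
      (¬ IsSquare ((D : ℤ) : ZMod p) → N = 1) by
    constructor
    · intro h1
      exact hkey.1 ((legendreSym.eq_one_iff p hDF).mp h1)
    · intro h2
      exact hkey.2 ((legendreSym.eq_neg_one_iff p).mp h2)
  by_cases hxR : x ∈ Set.range φ <;> by_cases hyR : y ∈ Set.range φ <;>
    by_cases hzR : z ∈ Set.range φ
  · -- all three rational : N = 3, square
    have hN3 : N = 3 := by
      rw [hNcard, Finset.filter_true_of_mem (by
        intro w hw
        simp only [Finset.mem_insert, Finset.mem_singleton] at hw
        rcases hw with rfl | rfl | rfl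
        exacts [hxR, hyR, hzR])]
      rw [Finset.card_insert_of_notMem (by simp [hxy, hxz]),
        Finset.card_insert_of_notMem (by simp [hyz]), Finset.card_singleton]
    obtain ⟨u, hu⟩ := hxR
    obtain ⟨v, hv⟩ := hyR
    obtain ⟨w, hw⟩ := hzR
    have hsq : IsSquare ((D : ℤ) : ZMod p) := by
      refine ⟨(u - v) * (u - w) * (v - w), φ.injective ?_⟩
      rw [hdK, map_mul, map_mul, map_mul, map_sub, map_sub, map_sub, hu, hv, hw]
      ring
    exact ⟨fun _ => Or.inr hN3, fun hn => absurd hsq hn⟩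
  · -- x, y rational, z not : impossible
    obtain ⟨u, hu⟩ := hxR
    obtain ⟨v, hv⟩ := hyR
    exact absurd ⟨-(a : ZMod p) - u - v, by
      rw [map_sub, map_sub, map_neg, hb3, hu, hv]; ring⟩ hzR
  · -- x, z rational, y not : impossible
    obtain ⟨u, hu⟩ := hxR
    obtain ⟨w, hw⟩ := hzR
    exact absurd ⟨-(a : ZMod p) - u - w, by
      rw [map_sub, map_sub, map_neg, hb3, hu, hw]; ring⟩ hyR
  · -- only x rational : N = 1, nonsquare
    have hnsq : ¬ IsSquare ((D : ℤ) : ZMod p) :=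
      notSquareAux φ h2K hdK hxR hyR hxy hxz hr1 hr2
    have hN1 : N = 1 := by
      rw [hNcard]
      have hT : (({x, y, z} : Finset K).filter (· ∈ Set.range φ)) = {x} := by
        ext w
        simp only [Finset.mem_filter, Finset.mem_insert, Finset.mem_singleton]
        constructor
        · rintro ⟨rfl | rfl | rfl, hr⟩
          · rfl
          · exact absurd hr hyR
          · exact absurd hr hzR
        · rintro rfl
          exact ⟨Or.inl rfl, hxR⟩
      rw [hT, Finset.card_singleton]
    exact ⟨fun hs => absurd hs hnsq, fun _ => hN1⟩
  · -- y, z rational, x not : impossible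
    obtain ⟨v, hv⟩ := hyR
    obtain ⟨w, hw⟩ := hzR
    exact absurd ⟨-(a : ZMod p) - v - w, by
      rw [map_sub, map_sub, map_neg, hb3, hv, hw]; ring⟩ hxR
  · -- only y rational : N = 1, nonsquare
    have hnsq : ¬ IsSquare ((D : ℤ) : ZMod p) := by
      refine notSquareAux φ h2K (x := y) (y := x) (z := z) ?_ hyR hxR (fun h => hxy h.symm) hyz
        ?_ ?_
      · rw [hdK]; ring
      · rw [show y + x + z = x + y + z from by ring]; exact hr1
      · rw [show y * x + y * z + x * z = x * y + x * z + y * z from by ring]; exact hr2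
    have hN1 : N = 1 := by
      rw [hNcard]
      have hT : (({x, y, z} : Finset K).filter (· ∈ Set.range φ)) = {y} := by
        ext w
        simp only [Finset.mem_filter, Finset.mem_insert, Finset.mem_singleton]
        constructor
        · rintro ⟨rfl | rfl | rfl, hr⟩
          · exact absurd hr hxR
          · rfl
          · exact absurd hr hzR
        · rintro rfl
          exact ⟨Or.inr (Or.inl rfl), hyR⟩
      rw [hT, Finset.card_singleton]
    exact ⟨fun hs => absurd hs hnsq, fun _ => hN1⟩
  · -- only z rational : N = 1, nonsquare
    have hnsq : ¬ IsSquare ((D : ℤ) : ZMod p) := by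
      refine notSquareAux φ h2K (x := z) (y := x) (z := y) ?_ hzR hxR (fun h => hxz h.symm)
        (fun h => hyz h.symm) ?_ ?_
      · rw [hdK]; ring
      · rw [show z + x + y = x + y + z from by ring]; exact hr1
      · rw [show z * x + z * y + x * y = x * y + x * z + y * z from by ring]; exact hr2
    have hN1 : N = 1 := by
      rw [hNcard]
      have hT : (({x, y, z} : Finset K).filter (· ∈ Set.range φ)) = {z} := by
        ext w
        simp only [Finset.mem_filter, Finset.mem_insert, Finset.mem_singleton]
        constructor
        · rintro ⟨rfl | rfl | rfl, hr⟩
          · exact absurd hr hxR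
          · exact absurd hr hyR
          · rfl
        · rintro rfl
          exact ⟨Or.inr (Or.inr rfl), hzR⟩
      rw [hT, Finset.card_singleton]
    exact ⟨fun hs => absurd hs hnsq, fun _ => hN1⟩
  · -- no rational roots : N = 0, square (Frobenius is a 3-cycle)
    have hN0 : N = 0 := by
      rw [hNcard, Finset.card_eq_zero]
      apply Finset.filter_false_of_mem
      intro w hw
      simp only [Finset.mem_insert, Finset.mem_singleton] at hw
      rcases hw with rfl | rfl | rfl
      exacts [hxR, hyR, hzR]
    have hAp : (φ (a : ZMod p)) ^ p = φ (a : ZMod p) := by rw [← map_pow, ZMod.pow_card]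
    have hBp : (φ (b : ZMod p)) ^ p = φ (b : ZMod p) := by rw [← map_pow, ZMod.pow_card]
    have hCp : (φ (c : ZMod p)) ^ p = φ (c : ZMod p) := by rw [← map_pow, ZMod.pow_card]
    have hfrob : ∀ w : K, (w = x ∨ w = y ∨ w = z) →
        (w ^ p = x ∨ w ^ p = y ∨ w ^ p = z) := by
      intro w hw
      exact (hrootK (w ^ p)).mpr (cubeFrob hAp hBp hCp ((hrootK w).mp hw))
    have hnfix : ∀ w : K, (w = x ∨ w = y ∨ w = z) → w ^ p ≠ w := by
      intro w hw hfix
      have : w ∈ Set.range φ := frobFixedMem φ hfix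
      rcases hw with rfl | rfl | rfl
      exacts [hxR this, hyR this, hzR this]
    have hinj : ∀ w w' : K, w ^ p = w' ^ p → w = w' := by
      intro w w' h
      have hsub : (w - w') ^ p = 0 := by rw [sub_pow_char, h, sub_self]
      exact sub_eq_zero.mp (pow_eq_zero_iff hprime.ne_zero |>.mp hsub)
    have hδp := deltaFixed hinj
      (hnfix x (Or.inl rfl)) (hnfix y (Or.inr (Or.inl rfl))) (hnfix z (Or.inr (Or.inr rfl)))
      (hfrob x (Or.inl rfl)) (hfrob y (Or.inr (Or.inl rfl))) (hfrob z (Or.inr (Or.inr rfl)))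
      hxy hxz hyz
    obtain ⟨e, he⟩ := frobFixedMem φ hδp
    have hsq : IsSquare ((D : ℤ) : ZMod p) := by
      refine ⟨e, φ.injective ?_⟩
      rw [hdK, map_mul, ← he]
      ring
    exact ⟨fun _ => Or.inl hN0, fun hn => absurd hsq hn⟩
end

section
/- Let p > 2 and consider the 3×3 matrix M(x,y,z) over F_p with rows (x, y, az), (z, x, y), (z, 0, x), where a ∈ F_p is nonzero. If (x,y,z) ≠ (0,0,0), then the rank of M(x,y,z) is at least 2. -/
lemma aux_rank_two_of_minor {K : Type*} [Field K] [DecidableEq K]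
    (A : Matrix (Fin 3) (Fin 3) K) (r c : Fin 2 → Fin 3)
    (h : (A.submatrix r c).det ≠ 0) : 2 ≤ A.rank := by
  have h2 : (A.submatrix r c).rank = 2 := by
    rw [Matrix.rank_of_isUnit _ ((Matrix.isUnit_iff_isUnit_det _).mpr h.isUnit),
      Fintype.card_fin]
  have hfac : A.submatrix r c =
      ((1 : Matrix (Fin 3) (Fin 3) K).submatrix r (Equiv.refl (Fin 3))) *
        (A * ((1 : Matrix (Fin 3) (Fin 3) K).submatrix (Equiv.refl (Fin 3)) c)) := by
    rw [Matrix.mul_submatrix_one, Matrix.one_submatrix_mul]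
    simp [Matrix.submatrix_submatrix]
  calc (2 : ℕ) = (A.submatrix r c).rank := h2.symm
    _ ≤ (A * ((1 : Matrix (Fin 3) (Fin 3) K).submatrix (Equiv.refl (Fin 3)) c)).rank := by
        rw [hfac]; exact Matrix.rank_mul_le_right _ _
    _ ≤ A.rank := Matrix.rank_mul_le_left _ _

/-- For `p > 2` prime and `a ∈ 𝔽_p` nonzero, the `3 × 3` matrix with rows `(x, y, az)`,
`(z, x, y)`, `(z, 0, x)` over `𝔽_p` has rank at least `2` whenever `(x, y, z) ≠ (0, 0, 0)`. -/
theorem rank_ge_two_of_elliptic_matrix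
    {p : ℕ} [Fact p.Prime] (hp : 2 < p)
    (a : ZMod p) (ha : a ≠ 0) (x y z : ZMod p) (hxyz : ¬(x = 0 ∧ y = 0 ∧ z = 0)) :
    2 ≤ (Matrix.of !![x, y, a * z; z, x, y; z, 0, x]).rank := by
  set A := Matrix.of !![x, y, a * z; z, x, y; z, 0, x] with hA
  by_cases hx : x ≠ 0
  · apply aux_rank_two_of_minor _ ![1, 2] ![1, 2]
    have : A.submatrix ![1, 2] ![1, 2] = !![x, y; 0, x] := by
      ext i j; fin_cases i <;> fin_cases j <;> rfl
    rw [this, Matrix.det_fin_two_of]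
    simpa using mul_ne_zero hx hx
  push_neg at hx
  subst hx
  by_cases hz : z ≠ 0
  · by_cases hy : y ≠ 0
    · apply aux_rank_two_of_minor _ ![0, 2] ![0, 1]
      have : A.submatrix ![0, 2] ![0, 1] = !![(0 : ZMod p), y; z, 0] := by
        ext i j; fin_cases i <;> fin_cases j <;> rfl
      rw [this, Matrix.det_fin_two_of]
      simpa using mul_ne_zero hy hz
    · push_neg at hy; subst hy
      apply aux_rank_two_of_minor _ ![0, 2] ![0, 2]
      have : A.submatrix ![0, 2] ![0, 2] = !![(0 : ZMod p), a * z; z, 0] := by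
        ext i j; fin_cases i <;> fin_cases j <;> rfl
      rw [this, Matrix.det_fin_two_of]
      simpa using mul_ne_zero (mul_ne_zero ha hz) hz
  · push_neg at hz; subst hz
    have hy : y ≠ 0 := fun h => hxyz ⟨rfl, h, rfl⟩
    apply aux_rank_two_of_minor _ ![0, 1] ![1, 2]
    have : A.submatrix ![0, 1] ![1, 2] = !![y, a * 0; (0 : ZMod p), y] := by
      ext i j; fin_cases i <;> fin_cases j <;> rfl
    rw [this, Matrix.det_fin_two_of]
    simpa using mul_ne_zero hy hy
end

section
/- Let p ≠ 23 be an odd prime and let f(T) = T³ − T − 1. If the Legendre symbol (p/23) equals −1, then f has exactly one root in F_p. -/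
open Polynomial

/-- Two distinct roots of `x^3 - x - 1` in a field give a square root of `-23`. -/
private lemma aux_sq_eq_neg23_of_two_roots {K : Type*} [Field K] {a b : K}
    (ha : a ^ 3 - a - 1 = 0) (hb : b ^ 3 - b - 1 = 0) (hab : a ≠ b) :
    ((a - b) * (a + 2*b) * (2*a + b)) ^ 2 = -23 := by
  have hne : a - b ≠ 0 := sub_ne_zero.mpr hab
  have h1 : a^2 + a*b + b^2 = 1 := by
    have key : (a - b) * (a^2 + a*b + b^2) = (a - b) * 1 := by linear_combination ha - hb
    exact mul_left_cancel₀ hne key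
  linear_combination (4*a^3 + 12*a^2*b - 3*a*b^2 - 26*b^3 + 4*a + 12*b + 4) * ha
    + (-3*a^2*b + 12*a*b^2 + 4*b^3 - 8*a + 10*b - 31) * hb
    + (-6*b^2 + 9*b + 4) * h1

/-- Three distinct roots of `x^3 - x - 1` in a field: the square of the root-difference
product is `-23` (the negative of the discriminant is ... well, the discriminant). -/
private lemma aux_sq_eq_neg23_of_three_roots {K : Type*} [Field K] {a b c : K}
    (ha : a ^ 3 - a - 1 = 0) (hb : b ^ 3 - b - 1 = 0) (hc : c ^ 3 - c - 1 = 0)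
    (hab : a ≠ b) (hbc : b ≠ c) (hac : a ≠ c) :
    ((a - b) * (b - c) * (c - a)) ^ 2 = -23 := by
  have h1 : a^2 + a*b + b^2 = 1 := by
    have key : (a - b) * (a^2 + a*b + b^2) = (a - b) * 1 := by linear_combination ha - hb
    exact mul_left_cancel₀ (sub_ne_zero.mpr hab) key
  have h2 : b^2 + b*c + c^2 = 1 := by
    have key : (b - c) * (b^2 + b*c + c^2) = (b - c) * 1 := by linear_combination hb - hc
    exact mul_left_cancel₀ (sub_ne_zero.mpr hbc) key
  have he : a + b + c = 0 := by
    have key : (a - c) * (a + b + c) = (a - c) * 0 := by linear_combination h1 - h2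
    exact mul_left_cancel₀ (sub_ne_zero.mpr hac) key
  linear_combination (a^3*b^2 - 2*a^3*b*c + a^3*c^2 - 3*a^2*b^3 + 3*a^2*b^2*c + 3*a^2*b*c^2
      - 3*a^2*c^3 + 4*a*b^4 + 2*a*b^3*c - 12*a*b^2*c^2 + 2*a*b*c^3 + 4*a*c^4 - 4*b^5
      - 8*b^4*c + 12*b^3*c^2 + 12*b^2*c^3 - 8*b*c^4 - 4*c^5) * he
    + (4*b^4 + 8*b^3*c - 15*b^2*c^2 - 19*b*c^3 + 31*c^4 + 4*b^2 + 4*b*c - 23*c^2 + 4) * h2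
    + (-27*c^3 + 27*c - 27) * hc

/-- If `(p/23) = -1` then `-23` is not a square mod `p`. -/
private lemma aux_not_isSquare_neg23 {p : ℕ} [Fact p.Prime] [Fact (Nat.Prime 23)]
    (hp : p ≠ 2) (hp23 : p ≠ 23) (h : legendreSym 23 (p : ℤ) = -1) :
    ¬ IsSquare ((-23 : ℤ) : ZMod p) := by
  intro hsq
  have hne23 : ((23 : ℤ) : ZMod p) ≠ 0 := by
    rw [Ne, ZMod.intCast_zmod_eq_zero_iff_dvd]
    intro hdvd
    have : p ∣ 23 := by exact_mod_cast hdvd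
    exact hp23 ((Nat.prime_dvd_prime_iff_eq Fact.out Fact.out).mp this)
  have hne : ((-23 : ℤ) : ZMod p) ≠ 0 := by
    intro h0
    apply hne23
    have : ((-23 : ℤ) : ZMod p) = -(((23 : ℤ) : ZMod p)) := by push_cast; ring
    rw [this, neg_eq_zero] at h0
    exact h0
  have h1 : legendreSym p (-23) = 1 := (legendreSym.eq_one_iff p hne).mpr hsq
  have hpodd : p % 2 = 1 := (Nat.Prime.eq_two_or_odd (Fact.out : p.Prime)).resolve_left hp
  have hneg1 : legendreSym p (-1) = (-1 : ℤ) ^ (p / 2) := by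
    rw [legendreSym.at_neg_one hp, ZMod.χ₄_eq_neg_one_pow hpodd]
  have hrec : legendreSym 23 (p : ℤ) = (-1 : ℤ) ^ (p / 2 * (23 / 2)) * legendreSym p 23 :=
    legendreSym.quadratic_reciprocity' hp (by norm_num)
  have hpow : ((-1 : ℤ)) ^ (p / 2 * (23 / 2)) = (-1 : ℤ) ^ (p / 2) := by
    show ((-1 : ℤ)) ^ (p / 2 * 11) = (-1 : ℤ) ^ (p / 2)
    rw [pow_mul]
    rcases neg_one_pow_eq_or ℤ (p / 2) with hh | hh <;> rw [hh] <;> norm_num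
  have hmul : legendreSym p (-23) = legendreSym p (-1) * legendreSym p 23 := by
    rw [← legendreSym.mul]; norm_num
  have : (-1 : ℤ) = 1 := by
    rw [← h, hrec, hpow, ← hneg1, ← hmul, h1]
  norm_num at this

/-- Fixed points of the Frobenius `x ↦ x^p` lie in the prime field. -/
private lemma aux_fixed {p : ℕ} [Fact p.Prime] {K : Type*} [Field K] [Algebra (ZMod p) K]
    (x : K) (hx : x ^ p = x) : ∃ t : ZMod p, algebraMap (ZMod p) K t = x := by
  classical
  by_contra hc
  push_neg at hc
  have hp2 : 1 < p := (Fact.out : p.Prime).one_lt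
  have hg0 : (X ^ p - X : K[X]) ≠ 0 := FiniteField.X_pow_card_sub_X_ne_zero K hp2
  set T : Finset K := Finset.univ.image (algebraMap (ZMod p) K) with hT
  have hxT : x ∉ T := by
    intro hmem
    obtain ⟨t, -, ht⟩ := Finset.mem_image.mp hmem
    exact hc t ht
  have hsub : insert x T ⊆ (X ^ p - X : K[X]).roots.toFinset := by
    intro y hy
    rw [Multiset.mem_toFinset, mem_roots hg0]
    rcases Finset.mem_insert.mp hy with rfl | hyT
    · simp [IsRoot, hx]
    · obtain ⟨t, -, rfl⟩ := Finset.mem_image.mp hyT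
      have ht : t ^ p = t := ZMod.pow_card t
      simp [IsRoot, ← map_pow, ht]
  have hcard := Finset.card_le_card hsub
  rw [Finset.card_insert_of_notMem hxT] at hcard
  have hTc : T.card = p := by
    rw [hT, Finset.card_image_of_injective _ (algebraMap (ZMod p) K).injective,
      Finset.card_univ, ZMod.card]
  have hle : (X ^ p - X : K[X]).roots.toFinset.card ≤ p := by
    calc (X ^ p - X : K[X]).roots.toFinset.card
        ≤ Multiset.card (X ^ p - X : K[X]).roots := Multiset.toFinset_card_le _
      _ ≤ (X ^ p - X : K[X]).natDegree := Polynomial.card_roots' _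
      _ = p := FiniteField.X_pow_card_sub_X_natDegree_eq K hp2
  omega

/-- Let `p ≠ 23` be an odd prime and `f(T) = T³ − T − 1`.  If the Legendre symbol `(p/23)`
equals `−1`, then `f` has exactly one root in `𝔽_p`. -/
theorem cubic_one_root_of_legendre_neg_one
    {p : ℕ} [Fact p.Prime] [Fact (Nat.Prime 23)] (hp : p ≠ 2) (hp23 : p ≠ 23)
    (h : legendreSym 23 (p : ℤ) = -1) :
    (Finset.univ.filter fun x : ZMod p => x ^ 3 - x - 1 = 0).card = 1 := by
  have hsqn := aux_not_isSquare_neg23 hp hp23 h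
  have key : ∀ t : ZMod p, t ^ 2 ≠ -23 := by
    intro t ht
    apply hsqn
    refine ⟨t, ?_⟩
    push_cast
    linear_combination -ht
  have huniq : ∀ a b : ZMod p, a ^ 3 - a - 1 = 0 → b ^ 3 - b - 1 = 0 → a = b := by
    intro a b ha hb
    by_contra hab
    exact key _ (aux_sq_eq_neg23_of_two_roots ha hb hab)
  have hex : ∃ a : ZMod p, a ^ 3 - a - 1 = 0 := by
    by_contra hno
    push_neg at hno
    set f : (ZMod p)[X] := X ^ 3 - X - 1 with hf
    have hfm : f.Monic := by
      rw [hf]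
      monicity!
    have hdeg : f.natDegree = 3 := by
      rw [hf]
      compute_degree!
    have hirr : Irreducible f := by
      rw [Polynomial.irreducible_iff_roots_eq_zero_of_degree_le_three (by omega) (by omega)]
      rw [Multiset.eq_zero_iff_forall_notMem]
      intro r hr
      rw [mem_roots hfm.ne_zero] at hr
      apply hno r
      simpa [hf, IsRoot] using hr
    haveI : Fact (Irreducible f) := ⟨hirr⟩
    set K := AdjoinRoot f with hK
    haveI : CharP K p := charP_of_injective_algebraMap (algebraMap (ZMod p) K).injective p
    let pb := AdjoinRoot.powerBasis hfm.ne_zero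
    haveI : Fintype K := Module.fintypeOfFintype pb.basis
    have hcard : Fintype.card K = p ^ 3 := by
      rw [Module.card_eq_pow_finrank (K := ZMod p) (V := K), pb.finrank, ZMod.card]
      congr 1
    obtain ⟨α, hαroot⟩ : ∃ x : K, x ^ 3 - x - 1 = 0 :=
      ⟨AdjoinRoot.root f, by simpa [hf] using AdjoinRoot.eval₂_root f⟩
    have frob : ∀ x : K, x ^ 3 - x - 1 = 0 → (x ^ p) ^ 3 - x ^ p - 1 = 0 := by
      intro x hx
      have h0 : (x ^ 3 - x - 1) ^ p = 0 := by
        rw [hx, zero_pow (Fact.out : p.Prime).ne_zero]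
      rw [sub_pow_char, sub_pow_char, one_pow] at h0
      calc (x ^ p) ^ 3 - x ^ p - 1 = (x ^ 3) ^ p - x ^ p - 1 := by
            rw [← pow_mul, ← pow_mul, mul_comm]
        _ = 0 := h0
    set β := α ^ p with hβdef
    set γ := β ^ p with hγdef
    have hβroot : β ^ 3 - β - 1 = 0 := frob α hαroot
    have hγroot : γ ^ 3 - γ - 1 = 0 := frob β hβroot
    have hγp : γ ^ p = α := by
      have hcd : α ^ p ^ 3 = α := by rw [← hcard]; exact FiniteField.pow_card α
      rw [hγdef, hβdef]
      rw [← pow_mul, ← pow_mul, show p * (p * p) = p ^ 3 by ring]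
      exact hcd
    have hfix : ∀ x : K, x ^ 3 - x - 1 = 0 → x ^ p ≠ x := by
      intro x hx hxp
      obtain ⟨t, ht⟩ := aux_fixed x hxp
      apply hno t
      apply (algebraMap (ZMod p) K).injective
      rw [map_sub, map_sub, map_pow, map_one, map_zero, ht]
      exact hx
    have hne1 : α ≠ β := fun hh => hfix α hαroot hh.symm
    have hne2 : β ≠ γ := fun hh => hfix β hβroot hh.symm
    have hne3 : α ≠ γ := by
      intro hh
      refine hfix α hαroot ?_
      conv_lhs => rw [hh]
      exact hγp
    have hδ := aux_sq_eq_neg23_of_three_roots hαroot hβroot hγroot hne1 hne2 hne3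
    set δ := (α - β) * (β - γ) * (γ - α) with hδdef
    have hδp : δ ^ p = δ := by
      rw [hδdef, mul_pow, mul_pow, sub_pow_char, sub_pow_char, sub_pow_char,
        ← hβdef, ← hγdef, hγp]
      ring
    obtain ⟨t, ht⟩ := aux_fixed δ hδp
    apply key t
    apply (algebraMap (ZMod p) K).injective
    rw [map_pow, ht, hδ]
    simp [map_ofNat]
  obtain ⟨a, ha⟩ := hex
  rw [Finset.card_eq_one]
  refine ⟨a, ?_⟩
  apply Finset.eq_singleton_iff_unique_mem.mpr
  constructor
  · simp [ha]
  · intro b hb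
    simp only [Finset.mem_filter] at hb
    exact huniq b a hb.2 ha
end

section
/- Let G be a finite group of order p^{2n+1} for an odd prime p, such that Z(G) has order p and G/Z(G) is elementary abelian (i.e., G is extra special). Then the smallest dimension of a faithful complex representation of G is p^n. -/
open Subgroup Module LinearMap CategoryTheory MonoidalCategory

set_option synthInstance.maxHeartbeats 400000
set_option linter.unusedVariables false
set_option linter.unusedSectionVars false
set_option maxHeartbeats 1600000

section ExtraSpecialAux

variable {G : Type} [Group G]


/-- closure of a pairwise-commuting set is commutative -/
lemma closure_comm {T : Set G} (h : ∀ a ∈ T, ∀ b ∈ T, a * b = b * a) :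
    ∀ c ∈ Subgroup.closure T, ∀ d ∈ Subgroup.closure T, c * d = d * c := by
  have h1 : Subgroup.closure T ≤ Subgroup.centralizer T := by
    rw [Subgroup.closure_le]
    intro a ha
    exact Subgroup.mem_centralizer_iff.2 fun g hg => h g hg a ha
  intro c hc d hd
  have hd' : d ∈ Subgroup.centralizer T := h1 hd
  have h2 : Subgroup.closure T ≤ Subgroup.centralizer {d} := by
    rw [Subgroup.closure_le]
    intro a ha
    exact Subgroup.mem_centralizer_iff.2 (by
      rintro g rfl
      exact (Subgroup.mem_centralizer_iff.1 hd' a ha).symm)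
  have := Subgroup.mem_centralizer_iff.1 (h2 hc) d rfl
  exact this.symm

/-- there exists a maximal abelian subgroup containing the center, and it equals
its own centralizer -/
lemma exists_maximal_abelian [Finite G] :
    ∃ A : Subgroup G, Subgroup.center G ≤ A ∧ (∀ x ∈ A, ∀ y ∈ A, x * y = y * x) ∧
      Subgroup.centralizer (A : Set G) = A := by
  classical
  have : Finite (Subgroup G) := Finite.of_injective _ SetLike.coe_injective
  set S : Set (Subgroup G) :=
    {B | Subgroup.center G ≤ B ∧ ∀ x ∈ B, ∀ y ∈ B, x * y = y * x} with hS
  have hSne : (Subgroup.center G) ∈ S := by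
    refine ⟨le_rfl, fun x hx y hy => ?_⟩
    exact (Subgroup.mem_center_iff.1 hx y).symm
  obtain ⟨A, hAS, hAmax⟩ : ∃ A ∈ S, ∀ B ∈ S, A ≤ B → A = B := by
    obtain ⟨A, hA⟩ := S.toFinite.exists_maximal ⟨_, hSne⟩
    exact ⟨A, hA.1, fun B hB hAB => le_antisymm hAB (hA.2 hB hAB)⟩
  refine ⟨A, hAS.1, hAS.2, le_antisymm ?_ ?_⟩
  · intro x hx
    set B := Subgroup.closure ((A : Set G) ∪ {x}) with hB
    have hsub : (A : Set G) ∪ {x} ⊆ B := Subgroup.subset_closure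
    have hcomm' : ∀ a ∈ (A : Set G) ∪ {x}, ∀ b ∈ (A : Set G) ∪ {x}, a * b = b * a := by
      rintro a (ha | rfl) b (hb | rfl)
      · exact hAS.2 a ha b hb
      · exact (Subgroup.mem_centralizer_iff.1 hx a ha)
      · exact (Subgroup.mem_centralizer_iff.1 hx b hb).symm
      · rfl
    have hAB : A ≤ B := fun a ha => hsub (Or.inl ha)
    have hBS : B ∈ S := ⟨le_trans hAS.1 hAB, closure_comm hcomm'⟩
    have : A = B := hAmax B hBS hAB
    rw [this]
    exact hsub (Or.inr rfl)
  · intro a ha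
    exact Subgroup.mem_centralizer_iff.2 fun g hg => hAS.2 g hg a ha


variable {p n : ℕ} [Fact p.Prime] [Fintype G]

section pair

variable (hcomm : ∀ a b : G, a * b * a⁻¹ * b⁻¹ ∈ Subgroup.center G)

def pairFun (g a : G) : ↥(Subgroup.center G) := ⟨g * a * g⁻¹ * a⁻¹, hcomm g a⟩

lemma pairFun_mul_right (g a b : G) :
    pairFun hcomm g (a * b) = pairFun hcomm g a * pairFun hcomm g b := by
  have hu := Subgroup.mem_center_iff.1 (hcomm g b)
  refine Subtype.ext ?_
  show g * (a * b) * g⁻¹ * (a * b)⁻¹ = (g * a * g⁻¹ * a⁻¹) * (g * b * g⁻¹ * b⁻¹)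
  calc g * (a * b) * g⁻¹ * (a * b)⁻¹
      = (g * a * g⁻¹) * (g * b * g⁻¹ * b⁻¹) * a⁻¹ := by group
    _ = (g * b * g⁻¹ * b⁻¹) * (g * a * g⁻¹) * a⁻¹ := by rw [hu (g * a * g⁻¹)]
    _ = (g * b * g⁻¹ * b⁻¹) * (g * a * g⁻¹ * a⁻¹) := by group
    _ = (g * a * g⁻¹ * a⁻¹) * (g * b * g⁻¹ * b⁻¹) := (hu _).symm

lemma pairFun_mul_left (g h a : G) :
    pairFun hcomm (g * h) a = pairFun hcomm g a * pairFun hcomm h a := by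
  have hv := Subgroup.mem_center_iff.1 (hcomm h a)
  refine Subtype.ext ?_
  show (g * h) * a * (g * h)⁻¹ * a⁻¹ = (g * a * g⁻¹ * a⁻¹) * (h * a * h⁻¹ * a⁻¹)
  calc (g * h) * a * (g * h)⁻¹ * a⁻¹
      = (g * (h * a * h⁻¹ * a⁻¹)) * (a * g⁻¹ * a⁻¹) := by group
    _ = ((h * a * h⁻¹ * a⁻¹) * g) * (a * g⁻¹ * a⁻¹) := by rw [hv g]
    _ = (h * a * h⁻¹ * a⁻¹) * (g * a * g⁻¹ * a⁻¹) := by group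
    _ = (g * a * g⁻¹ * a⁻¹) * (h * a * h⁻¹ * a⁻¹) := (hv _).symm

lemma pairFun_eq_one_iff (g a : G) :
    pairFun hcomm g a = 1 ↔ g * a = a * g := by
  rw [Subtype.ext_iff]
  show g * a * g⁻¹ * a⁻¹ = 1 ↔ _
  rw [mul_inv_eq_one, mul_inv_eq_iff_eq_mul]

end pair


lemma quotient_card_le
    (hcard : Fintype.card G = p ^ (2 * n + 1))
    (hcomm : ∀ a b : G, a * b * a⁻¹ * b⁻¹ ∈ Subgroup.center G)
    (A : Subgroup G) (hZA : Subgroup.center G ≤ A)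
    (hA : ∀ x ∈ A, ∀ y ∈ A, x * y = y * x)
    (hAc : Subgroup.centralizer (A : Set G) = A)
    (χc : ↥(Subgroup.center G) →* ℂˣ) (hχ : Function.Injective χc) :
    Nat.card (G ⧸ A) ≤ p ^ n := by
  letI : CommGroup ↥A := { (inferInstance : Group ↥A) with mul_comm := fun a b => Subtype.ext (hA a a.2 b b.2) }
  haveI : NeZero ((Monoid.exponent ↥A : ℂ)) :=
    ⟨by exact_mod_cast Monoid.exponent_ne_zero_of_finite (G := ↥A)⟩
  set F : G →* (↥A →* ℂˣ) :=
    MonoidHom.mk' (fun g => MonoidHom.mk' (fun a => χc (pairFun hcomm g ↑a))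
        (fun a b => by
          show χc (pairFun hcomm g (↑a * ↑b)) = _
          rw [pairFun_mul_right, map_mul]))
      (fun g h => MonoidHom.ext fun a => by
          show χc (pairFun hcomm (g * h) ↑a) = _
          rw [pairFun_mul_left, map_mul]; rfl) with hFdef
  have hker : F.ker = A := by
    ext g
    rw [MonoidHom.mem_ker]
    constructor
    · intro hg
      rw [← hAc]
      apply Subgroup.mem_centralizer_iff.2
      intro y hy
      have h1 : χc (pairFun hcomm g y) = 1 := by
        have := MonoidHom.ext_iff.1 hg (⟨y, hy⟩ : ↥A)
        exact this
      have h2 : pairFun hcomm g y = 1 := hχ (by rw [h1, map_one])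
      exact ((pairFun_eq_one_iff hcomm g y).1 h2).symm
    · intro hg
      refine MonoidHom.ext fun a => ?_
      have h2 : pairFun hcomm g ↑a = 1 :=
        (pairFun_eq_one_iff hcomm g ↑a).2 (hA g hg ↑a a.2)
      show χc (pairFun hcomm g ↑a) = _
      rw [h2, map_one, MonoidHom.one_apply]
  -- counting
  obtain ⟨e⟩ := CommGroup.monoidHom_mulEquiv_of_hasEnoughRootsOfUnity (↥A) ℂ
  haveI : Finite (↥A →* ℂˣ) := Finite.of_equiv _ e.toEquiv.symm
  have hcard1 : Nat.card (G ⧸ A) ≤ Nat.card ↥A := by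
    have key : Nat.card (G ⧸ F.ker) ≤ Nat.card ↥A := by
      calc Nat.card (G ⧸ F.ker)
          = Nat.card F.range := Nat.card_congr (QuotientGroup.quotientKerEquivRange F).toEquiv
        _ ≤ Nat.card (↥A →* ℂˣ) := Nat.card_le_card_of_injective _ Subtype.val_injective
        _ = Nat.card ↥A := Nat.card_congr e.toEquiv
    rwa [hker] at key
  have hGcard : Nat.card (G ⧸ A) * Nat.card ↥A = p ^ (2 * n + 1) := by
    rw [← Subgroup.card_eq_card_quotient_mul_card_subgroup A, Nat.card_eq_fintype_card, hcard]
  have hdvd : Nat.card (G ⧸ A) ∣ p ^ (2 * n + 1) := ⟨Nat.card ↥A, hGcard.symm⟩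
  obtain ⟨j, hj, hq⟩ := (Nat.dvd_prime_pow (Fact.out : p.Prime)).1 hdvd
  have hsq : p ^ (2 * j) ≤ p ^ (2 * n + 1) := by
    calc p ^ (2 * j) = Nat.card (G ⧸ A) * Nat.card (G ⧸ A) := by rw [hq]; ring
      _ ≤ Nat.card (G ⧸ A) * Nat.card ↥A :=
          Nat.mul_le_mul_left _ hcard1
      _ = p ^ (2 * n + 1) := hGcard
  have hj2 : 2 * j ≤ 2 * n + 1 :=
    (Nat.pow_le_pow_iff_right (Fact.out : p.Prime).one_lt).1 hsq
  have hjn : j ≤ n := by omega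
  rw [hq]
  exact Nat.pow_le_pow_right (Fact.out : p.Prime).pos hjn


open scoped Classical in
noncomputable def cfun (A : Subgroup G) (χ : ↥A →* ℂˣ) (t : G) : ℂ :=
  if h : t ∈ A then (χ ⟨t, h⟩ : ℂ) else 0

noncomputable def Mmat (A : Subgroup G) (χ : ↥A →* ℂˣ) (g : G) :
    Matrix (G ⧸ A) (G ⧸ A) ℂ :=
  Matrix.of fun x y => cfun A χ ((Quotient.out x)⁻¹ * g * Quotient.out y)

lemma exists_faithful_matrix_rep [Fintype G]
    (hcomm : ∀ a b : G, a * b * a⁻¹ * b⁻¹ ∈ Subgroup.center G)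
    (A : Subgroup G) [Fintype (G ⧸ A)] [DecidableEq (G ⧸ A)] (hZA : Subgroup.center G ≤ A)
    (χ : ↥A →* ℂˣ) (hχ : Function.Injective (χ.comp (Subgroup.inclusion hZA))) :
    ∃ ρ : G →* (Matrix (G ⧸ A) (G ⧸ A) ℂ)ˣ, Function.Injective ρ := by
  set σ : (G ⧸ A) → G := Quotient.out with hσ
  have hout : ∀ x : G ⧸ A, QuotientGroup.mk (σ x) = x := fun x => QuotientGroup.out_eq' x
  have hmem : ∀ (x : G ⧸ A) (t : G), (σ x)⁻¹ * t ∈ A ↔ QuotientGroup.mk t = x := by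
    intro x t
    exact ⟨fun h => ((QuotientGroup.eq.2 h).symm).trans (hout x),
      fun h => QuotientGroup.eq.1 ((hout x).trans h.symm)⟩
  -- multiplicativity
  have Mmul : ∀ g h : G, Mmat A χ (g * h) = Mmat A χ g * Mmat A χ h := by
    intro g h
    ext x z
    rw [Matrix.mul_apply]
    set y₀ : G ⧸ A := QuotientGroup.mk (h * σ z) with hy₀def
    have hy₀mem : (σ y₀)⁻¹ * h * σ z ∈ A := by
      have h1 : (σ y₀)⁻¹ * (h * σ z) ∈ A := (hmem y₀ (h * σ z)).2 rfl
      rwa [← mul_assoc] at h1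
    have hsum : (∑ y : G ⧸ A, Mmat A χ g x y * Mmat A χ h y z)
        = Mmat A χ g x y₀ * Mmat A χ h y₀ z := by
      apply Finset.sum_eq_single y₀
      · intro y _ hy
        have : Mmat A χ h y z = 0 := by
          show cfun A χ ((σ y)⁻¹ * h * σ z) = 0
          rw [cfun, dif_neg]
          intro hmem'
          apply hy
          have : (σ y)⁻¹ * (h * σ z) ∈ A := by rwa [← mul_assoc]
          exact ((hmem y (h * σ z)).1 this).symm
        rw [this, mul_zero]
      · intro hy₀
        exact absurd (Finset.mem_univ y₀) hy₀
    rw [hsum]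
    have hprod : (σ x)⁻¹ * (g * h) * σ z
        = ((σ x)⁻¹ * g * σ y₀) * ((σ y₀)⁻¹ * h * σ z) := by group
    by_cases hx : (σ x)⁻¹ * (g * h) * σ z ∈ A
    · have hxy₀ : (σ x)⁻¹ * g * σ y₀ ∈ A := by
        have : (σ x)⁻¹ * g * σ y₀
            = ((σ x)⁻¹ * (g * h) * σ z) * ((σ y₀)⁻¹ * h * σ z)⁻¹ := by group
        rw [this]
        exact mul_mem hx (inv_mem hy₀mem)
      show cfun A χ _ = cfun A χ _ * cfun A χ _
      rw [cfun, cfun, cfun, dif_pos hx, dif_pos hxy₀, dif_pos hy₀mem,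
        ← Units.val_mul, ← map_mul]
      congr 1
      congr 1
      exact Subtype.ext hprod
    · have hxy₀ : ¬ ((σ x)⁻¹ * g * σ y₀ ∈ A) := by
        intro hmem'
        apply hx
        rw [hprod]
        exact mul_mem hmem' hy₀mem
      show cfun A χ _ = cfun A χ _ * cfun A χ _
      rw [cfun, cfun, dif_neg hx, dif_neg hxy₀, zero_mul]
  have Mone : Mmat A χ 1 = 1 := by
    ext x y
    show cfun A χ ((σ x)⁻¹ * 1 * σ y) = (1 : Matrix (G ⧸ A) (G ⧸ A) ℂ) x y
    by_cases hxy : x = y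
    · subst hxy
      have h1 : (σ x)⁻¹ * 1 * σ x = 1 := by group
      rw [h1, Matrix.one_apply_eq, cfun, dif_pos (one_mem A)]
      have : (⟨1, one_mem A⟩ : ↥A) = 1 := rfl
      rw [this, map_one, Units.val_one]
    · rw [Matrix.one_apply_ne hxy, cfun, dif_neg]
      intro hmem'
      apply hxy
      have : (σ x)⁻¹ * σ y ∈ A := by
        have h1 : (σ x)⁻¹ * 1 * σ y = (σ x)⁻¹ * σ y := by group
        rwa [h1] at hmem'
      exact (((hmem x (σ y)).1 this).symm).trans (hout y)
  -- the monoid hom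
  set Mhom : G →* Matrix (G ⧸ A) (G ⧸ A) ℂ :=
    { toFun := Mmat A χ, map_one' := Mone, map_mul' := Mmul } with hMhom
  refine ⟨Mhom.toHomUnits, ?_⟩
  rw [injective_iff_map_eq_one]
  intro g hg
  have hgmat : Mmat A χ g = 1 := by
    have := congrArg Units.val hg
    rwa [MonoidHom.coe_toHomUnits] at this
  -- diagonal entries
  have h1 : ∀ x : G ⧸ A, (σ x)⁻¹ * g * σ x ∈ A := by
    intro x
    by_contra hmem'
    have := congrFun (congrFun hgmat x) x
    rw [Matrix.one_apply_eq] at this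
    rw [show Mmat A χ g x x = cfun A χ ((σ x)⁻¹ * g * σ x) from rfl,
      cfun, dif_neg hmem'] at this
    exact zero_ne_one this
  have h2 : ∀ x : G ⧸ A, χ ⟨(σ x)⁻¹ * g * σ x, h1 x⟩ = 1 := by
    intro x
    have := congrFun (congrFun hgmat x) x
    rw [Matrix.one_apply_eq] at this
    rw [show Mmat A χ g x x = cfun A χ ((σ x)⁻¹ * g * σ x) from rfl,
      cfun, dif_pos (h1 x)] at this
    exact Units.ext this
  -- transfer to arbitrary conjugates
  have h3 : ∀ t : G, ∃ hmem' : t⁻¹ * g * t ∈ A, χ ⟨t⁻¹ * g * t, hmem'⟩ = 1 := by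
    intro t
    set x : G ⧸ A := QuotientGroup.mk t with hx
    have hw : t⁻¹ * σ x ∈ A := QuotientGroup.eq.1 (hout x).symm
    have hid : t⁻¹ * g * t
        = (t⁻¹ * σ x) * ((σ x)⁻¹ * g * σ x) * (t⁻¹ * σ x)⁻¹ := by group
    have hmem' : t⁻¹ * g * t ∈ A := by
      rw [hid]; exact mul_mem (mul_mem hw (h1 x)) (inv_mem hw)
    refine ⟨hmem', ?_⟩
    have hval : (⟨t⁻¹ * g * t, hmem'⟩ : ↥A)
        = ⟨t⁻¹ * σ x, hw⟩ * ⟨(σ x)⁻¹ * g * σ x, h1 x⟩ * (⟨t⁻¹ * σ x, hw⟩)⁻¹ :=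
      Subtype.ext hid
    rw [hval, map_mul, map_mul, map_inv, h2 x, mul_one, mul_inv_cancel]
  -- g is in A
  obtain ⟨hgA', hχg'⟩ := h3 1
  have hgA : g ∈ A := by simpa using hgA'
  have hχg : χ ⟨g, hgA⟩ = 1 := by
    have : (⟨(1:G)⁻¹ * g * 1, hgA'⟩ : ↥A) = ⟨g, hgA⟩ := Subtype.ext (by group)
    rwa [this] at hχg'
  -- g is central
  have hcen : ∀ t : G, t * g = g * t := by
    intro t
    obtain ⟨hm, hv⟩ := h3 t⁻¹
    have hcm : t * g * t⁻¹ * g⁻¹ ∈ Subgroup.center G := hcomm t g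
    have hcmA : t * g * t⁻¹ * g⁻¹ ∈ A := hZA hcm
    have hsplit : (⟨t⁻¹⁻¹ * g * t⁻¹, hm⟩ : ↥A)
        = ⟨t * g * t⁻¹ * g⁻¹, hcmA⟩ * ⟨g, hgA⟩ :=
      Subtype.ext (show t⁻¹⁻¹ * g * t⁻¹ = (t * g * t⁻¹ * g⁻¹) * g by group)
    rw [hsplit, map_mul, hχg, mul_one] at hv
    have hone : (⟨t * g * t⁻¹ * g⁻¹, hcm⟩ : ↥(Subgroup.center G)) = 1 := by
      apply hχ
      rw [map_one]
      show χ (Subgroup.inclusion hZA ⟨t * g * t⁻¹ * g⁻¹, hcm⟩) = 1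
      have : Subgroup.inclusion hZA ⟨t * g * t⁻¹ * g⁻¹, hcm⟩
          = ⟨t * g * t⁻¹ * g⁻¹, hcmA⟩ := rfl
      rw [this, hv]
    have : t * g * t⁻¹ * g⁻¹ = 1 := congrArg Subtype.val hone
    rw [mul_inv_eq_one, mul_inv_eq_iff_eq_mul] at this
    exact this
  have hgZ : g ∈ Subgroup.center G := Subgroup.mem_center_iff.2 hcen
  have : (⟨g, hgZ⟩ : ↥(Subgroup.center G)) = 1 := by
    apply hχ
    rw [map_one]
    show χ (Subgroup.inclusion hZA ⟨g, hgZ⟩) = 1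
    have : Subgroup.inclusion hZA ⟨g, hgZ⟩ = ⟨g, hgA⟩ := rfl
    rw [this, hχg]
  exact congrArg Subtype.val this



lemma exists_char (A : Subgroup G) (hZA : Subgroup.center G ≤ A)
    (hA : ∀ x ∈ A, ∀ y ∈ A, x * y = y * x)
    (hcenter : Nat.card (Subgroup.center G) = p) :
    ∃ χ : ↥A →* ℂˣ, Function.Injective (χ.comp (Subgroup.inclusion hZA)) := by
  letI : CommGroup ↥A := { (inferInstance : Group ↥A) with mul_comm := fun a b => Subtype.ext (hA a a.2 b b.2) }
  haveI : NeZero ((Monoid.exponent ↥A : ℂ)) := by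
    have := Monoid.exponent_ne_zero_of_finite (G := ↥A)
    exact ⟨by exact_mod_cast this⟩
  -- nontrivial center
  haveI := Fintype.ofFinite ↥(Subgroup.center G)
  haveI : Nontrivial (Subgroup.center G) := by
    apply Fintype.one_lt_card_iff_nontrivial.1
    rw [← Nat.card_eq_fintype_card, hcenter]; exact (Fact.out : p.Prime).one_lt
  obtain ⟨z0, hz0⟩ := exists_ne (1 : ↥(Subgroup.center G))
  have hz0A : Subgroup.inclusion hZA z0 ≠ 1 := by
    intro h
    exact hz0 (Subgroup.inclusion_injective hZA (by simpa using h))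
  obtain ⟨χ, hχ⟩ := CommGroup.exists_apply_ne_one_of_hasEnoughRootsOfUnity ↥A ℂ hz0A
  refine ⟨χ, ?_⟩
  set f := χ.comp (Subgroup.inclusion hZA) with hf
  rw [← MonoidHom.ker_eq_bot_iff]
  -- the kernel is a subgroup of the center, which has prime order
  have hker : f.ker ≠ ⊤ := by
    intro h
    have : f z0 = 1 := by rw [← MonoidHom.mem_ker, h]; trivial
    exact hχ this
  have hdvd : Nat.card f.ker ∣ p := by
    rw [← hcenter]; exact Subgroup.card_subgroup_dvd_card _
  rcases (Nat.Prime.eq_one_or_self_of_dvd (Fact.out) _ hdvd) with h1 | hp'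
  · exact Subgroup.eq_bot_of_card_eq _ h1
  · exfalso
    exact hker (Subgroup.eq_top_of_card_eq _ (by rw [hp', hcenter]))


lemma faithful_dim_lower
    (hcard : Fintype.card G = p ^ (2 * n + 1))
    (hcenter : Nat.card (Subgroup.center G) = p)
    (hcomm : ∀ a b : G, a * b * a⁻¹ * b⁻¹ ∈ Subgroup.center G)
    {m : ℕ} (ρ : G →* Matrix.GeneralLinearGroup (Fin m) ℂ)
    (hρ : Function.Injective ρ) : p ^ n ≤ m := by
  classical
  have hp : p.Prime := Fact.out
  -- the representation as linear endomorphisms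
  set π : G →* Module.End ℂ (Fin m → ℂ) :=
    { toFun := fun g => Matrix.toLinAlgEquiv' ((ρ g : Matrix (Fin m) (Fin m) ℂ))
      map_one' := by show Matrix.toLinAlgEquiv' (((ρ 1 : GL (Fin m) ℂ) : Matrix (Fin m) (Fin m) ℂ)) = 1; rw [map_one, Units.val_one, map_one]
      map_mul' := fun g h => by
        show Matrix.toLinAlgEquiv' (((ρ (g * h) : GL (Fin m) ℂ) : Matrix (Fin m) (Fin m) ℂ)) = _
        rw [map_mul, Units.val_mul, map_mul] } with hπ
  have hπinj : Function.Injective π := by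
    intro g h hgh
    exact hρ (Units.ext (Matrix.toLinAlgEquiv'.injective hgh))
  -- a generator of the center
  haveI : Nontrivial (Subgroup.center G) := by
    haveI := Fintype.ofFinite ↥(Subgroup.center G)
    apply Fintype.one_lt_card_iff_nontrivial.1
    rw [← Nat.card_eq_fintype_card, hcenter]; exact hp.one_lt
  obtain ⟨z0, hz0⟩ := exists_ne (1 : ↥(Subgroup.center G))
  set z : G := ↑z0 with hzdef
  have hzc : z ∈ Subgroup.center G := z0.2
  have hzne : z ≠ 1 := fun h => hz0 (Subtype.ext h)
  have hz0p : z0 ^ p = 1 := by rw [← hcenter]; exact pow_card_eq_one'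
  have hzp : z ^ p = 1 := by
    have := congrArg (Subtype.val) hz0p
    simpa using this
  have horderz : orderOf z0 = p := orderOf_eq_prime hz0p hz0
  -- the operator T
  set T : Module.End ℂ (Fin m → ℂ) := π z with hT
  have hTp : T ^ p = 1 := by rw [hT, ← map_pow, hzp, map_one]
  have hTne : T ≠ 1 := by
    intro h
    exact hzne (hπinj (by rw [map_one]; exact h))
  set Q : Module.End ℂ (Fin m → ℂ) := ∑ i ∈ Finset.range p, T ^ i with hQ
  have hQmul : Q * (T - 1) = T ^ p - 1 := geom_sum_mul T p
  have hTQ : T * Q = Q * T := by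
    rw [hQ, Finset.mul_sum, Finset.sum_mul]
    exact Finset.sum_congr rfl fun i _ => by
      rw [← pow_succ, ← pow_succ']
  set K := LinearMap.ker Q with hK
  have hKne : K ≠ ⊥ := by
    intro h
    apply hTne
    have hQinj : Function.Injective Q := by
      rw [← LinearMap.ker_eq_bot, ← hK, h]
    have : ∀ v, Q ((T - 1) v) = Q 0 := by
      intro v
      rw [map_zero, ← Module.End.mul_apply, hQmul, hTp, sub_self]
      rfl
    have h2 : T - 1 = 0 := by
      refine LinearMap.ext fun w => ?_
      have h3 := hQinj (this w)
      simpa using h3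
    have := sub_eq_zero.1 h2
    exact this
  haveI : Nontrivial K := (Submodule.nontrivial_iff_ne_bot).2 hKne
  have hTK : ∀ x ∈ K, T x ∈ K := by
    intro x hx
    rw [hK, LinearMap.mem_ker] at hx ⊢
    rw [← Module.End.mul_apply, ← hTQ, Module.End.mul_apply, hx, map_zero]
  obtain ⟨μ, hμ⟩ := Module.End.exists_eigenvalue (T.restrict hTK)
  obtain ⟨v, hv⟩ := hμ.exists_hasEigenvector
  have hvne : (↑v : Fin m → ℂ) ≠ 0 := fun h => hv.2 (Subtype.ext h)
  have hvV : T ↑v = μ • (↑v : Fin m → ℂ) := by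
    have h1 := hv.apply_eq_smul
    exact congrArg Subtype.val h1
  have hpowv : ∀ i : ℕ, (T ^ i) ↑v = μ ^ i • (↑v : Fin m → ℂ) := by
    intro i
    induction i with
    | zero => simp
    | succ i ih =>
      rw [pow_succ, Module.End.mul_apply, hvV, map_smul, ih, smul_smul, ← pow_succ']
  -- μ is a nontrivial p-th root of unity
  have hQv : (∑ i ∈ Finset.range p, μ ^ i) • (↑v : Fin m → ℂ) = 0 := by
    have hvK : Q ↑v = 0 := LinearMap.mem_ker.1 v.2
    calc (∑ i ∈ Finset.range p, μ ^ i) • (↑v : Fin m → ℂ)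
        = ∑ i ∈ Finset.range p, μ ^ i • (↑v : Fin m → ℂ) := Finset.sum_smul
      _ = ∑ i ∈ Finset.range p, (T ^ i) ↑v :=
          Finset.sum_congr rfl fun i _ => (hpowv i).symm
      _ = Q ↑v := (LinearMap.sum_apply _ _ _).symm
      _ = 0 := hvK
  have hgeo : ∑ i ∈ Finset.range p, μ ^ i = 0 := by
    rcases smul_eq_zero.1 hQv with h | h
    · exact h
    · exact absurd h hvne
  have hμ1 : μ ≠ 1 := by
    intro h
    rw [h] at hgeo
    simp only [one_pow, Finset.sum_const, Finset.card_range, nsmul_eq_mul, mul_one] at hgeo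
    exact hp.ne_zero (by exact_mod_cast hgeo)
  have hμp : μ ^ p = 1 := by
    have hgm := geom_sum_mul μ p
    rw [hgeo, zero_mul] at hgm
    exact sub_eq_zero.1 hgm.symm
  have horderμ : orderOf μ = p := orderOf_eq_prime hμp hμ1
  -- the eigenspace W of T for μ
  set W : Submodule ℂ (Fin m → ℂ) := Module.End.eigenspace T μ with hW
  have hvW : (↑v : Fin m → ℂ) ∈ W := Module.End.mem_eigenspace_iff.2 hvV
  haveI : Nontrivial ↥W :=
    ⟨⟨⟨↑v, hvW⟩, 0, fun h => hvne (congrArg Subtype.val h)⟩⟩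
  have hWinv : ∀ g : G, ∀ w ∈ W, π g w ∈ W := by
    intro g w hw
    rw [hW, Module.End.mem_eigenspace_iff] at hw ⊢
    have hcommT : T * π g = π g * T := by
      rw [hT, ← map_mul, ← map_mul, Subgroup.mem_center_iff.1 hzc g]
    rw [← Module.End.mul_apply, hcommT, Module.End.mul_apply, hw, map_smul]
  set ρW : Representation ℂ G ↥W :=
    { toFun := fun g => (π g).restrict (hWinv g)
      map_one' := LinearMap.ext fun w => Subtype.ext (by
        show π 1 ↑w = ↑w
        rw [map_one]; rfl)
      map_mul' := fun g h => LinearMap.ext fun w => Subtype.ext (by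
        show π (g * h) ↑w = π g (π h ↑w)
        rw [map_mul]; rfl) } with hρW
  set X : FDRep ℂ G := FDRep.of ρW with hX
  have hXchar : ∀ g : G, X.character g = LinearMap.trace ℂ ↥W (ρW g) := fun g => rfl
  set d : ℕ := Module.finrank ℂ ↥W with hd
  have hρWz : ρW z = μ • (1 : Module.End ℂ ↥W) := by
    refine LinearMap.ext fun w => Subtype.ext ?_
    show T ↑w = _
    rw [Module.End.mem_eigenspace_iff.1 w.2]
    rfl
  -- central elements act as scalars
  have hscal : ∀ u0 : ↥(Subgroup.center G), ∃ c : ℂ,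
      ρW ↑u0 = c • (1 : Module.End ℂ ↥W) ∧ (u0 ≠ 1 → c ≠ 1) := by
    intro u0
    have hgen : Subgroup.zpowers z0 = ⊤ := by
      apply Subgroup.eq_top_of_card_eq
      rw [Nat.card_zpowers, horderz, hcenter]
    have hu0 : u0 ∈ Submonoid.powers z0 := by
      rw [mem_powers_iff_mem_zpowers, hgen]
      trivial
    obtain ⟨k, hk⟩ := hu0
    refine ⟨μ ^ k, ?_, ?_⟩
    · have hcoe : (↑u0 : G) = z ^ k := by
        rw [← hk]
        rfl
      rw [hcoe, map_pow, hρWz, smul_pow, one_pow]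
    · intro hne h1
      apply hne
      have hdvd : p ∣ k := horderμ ▸ orderOf_dvd_of_pow_eq_one h1
      obtain ⟨t, rfl⟩ := hdvd
      calc u0 = z0 ^ (p * t) := hk.symm
        _ = (z0 ^ p) ^ t := pow_mul z0 p t
        _ = 1 := by rw [hz0p, one_pow]
  -- off-center characters vanish
  have hchar0 : ∀ g : G, g ∉ Subgroup.center G → X.character g = 0 := by
    intro g hg
    obtain ⟨y, hy⟩ : ∃ y, ¬y * g = g * y := by
      by_contra h
      push_neg at h
      exact hg (Subgroup.mem_center_iff.2 h)
    set u0 : ↥(Subgroup.center G) := ⟨y * g * y⁻¹ * g⁻¹, hcomm y g⟩ with hu0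
    have hu0ne : u0 ≠ 1 := by
      intro h
      apply hy
      have h2 : y * g * y⁻¹ * g⁻¹ = 1 := congrArg Subtype.val h
      rw [mul_inv_eq_one, mul_inv_eq_iff_eq_mul] at h2
      exact h2
    obtain ⟨c, hc1, hc2⟩ := hscal u0
    have hcne := hc2 hu0ne
    have hconj := FDRep.char_conj X g y
    have hyg : y * g * y⁻¹ = ↑u0 * g := by
      show _ = y * g * y⁻¹ * g⁻¹ * g
      group
    rw [hyg] at hconj
    have hmul : X.character (↑u0 * g) = c * X.character g := by
      rw [hXchar, hXchar, map_mul, hc1, smul_mul_assoc, one_mul, map_smul, smul_eq_mul]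
    rw [hmul] at hconj
    have h3 : (c - 1) * X.character g = 0 := by linear_combination hconj
    rcases mul_eq_zero.1 h3 with h | h
    · exact absurd (sub_eq_zero.1 h) hcne
    · exact h
  -- central characters
  have hcharZ : ∀ u0 : ↥(Subgroup.center G),
      X.character ↑u0 * X.character ((↑u0 : G)⁻¹) = (d : ℂ) ^ 2 := by
    intro u0
    obtain ⟨c, hc1, -⟩ := hscal u0
    obtain ⟨c', hc1', -⟩ := hscal u0⁻¹
    have hval : ((u0⁻¹ : ↥(Subgroup.center G)) : G) = (↑u0 : G)⁻¹ := rfl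
    rw [hval] at hc1'
    have hcc : c * c' = 1 := by
      have h1 : ρW ↑u0 * ρW ((↑u0 : G)⁻¹) = 1 := by
        rw [← map_mul, mul_inv_cancel, map_one]
      rw [hc1, hc1', smul_mul_assoc, one_mul, smul_smul] at h1
      have h2 := LinearMap.congr_fun h1 (⟨↑v, hvW⟩ : ↥W)
      have h3 : (c * c') • (⟨↑v, hvW⟩ : ↥W) = ⟨↑v, hvW⟩ := h2
      have hvv : (⟨↑v, hvW⟩ : ↥W) ≠ 0 := fun h => hvne (congrArg Subtype.val h)
      exact smul_left_injective ℂ hvv (h3.trans (one_smul ℂ (⟨↑v, hvW⟩ : ↥W)).symm)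
    have e1 : X.character ↑u0 = c * (d : ℂ) := by
      rw [hXchar, hc1, map_smul, smul_eq_mul, LinearMap.trace_one]
    have e2 : X.character ((↑u0 : G)⁻¹) = c' * (d : ℂ) := by
      rw [hXchar, hc1', map_smul, smul_eq_mul, LinearMap.trace_one]
    rw [e1, e2]
    calc c * (d:ℂ) * (c' * d) = (c * c') * (d * d) := by ring
      _ = (d:ℂ)^2 := by rw [hcc, one_mul]; ring
  -- the tensor with the dual
  set Y : FDRep ℂ G := X ⊗ FDRep.of (Representation.dual X.ρ) with hYdef
  have hY : ∀ g : G, Y.character g = X.character g * X.character g⁻¹ := by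
    intro g
    have h1 := FDRep.char_tensor X (FDRep.of (Representation.dual X.ρ))
    have h2 := congrFun h1 g
    rw [Pi.mul_apply] at h2
    rw [hYdef, h2, FDRep.char_dual]
  letI : Invertible (Fintype.card G : ℂ) :=
    invertibleOfNonzero (by exact_mod_cast Fintype.card_ne_zero)
  have havg := FDRep.average_char_eq_finrank_invariants Y
  set N : ℕ := Module.finrank ℂ (Representation.invariants Y.ρ) with hN
  have hsum : ∑ g : G, Y.character g = (p : ℂ) * (d : ℂ) ^ 2 := by
    have hre : ∀ g : G, Y.character g
        = if g ∈ Subgroup.center G then ((d : ℂ)) ^ 2 else 0 := by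
      intro g
      by_cases hg : g ∈ Subgroup.center G
      · rw [if_pos hg, hY g]
        exact hcharZ ⟨g, hg⟩
      · rw [if_neg hg, hY g, hchar0 g hg, zero_mul]
    rw [Finset.sum_congr rfl fun g _ => hre g, ← Finset.sum_filter,
      Finset.sum_const, nsmul_eq_mul]
    have hfc : ((Finset.univ.filter (· ∈ Subgroup.center G)).card : ℂ) = (p : ℂ) := by
      have h1 : Fintype.card {x : G // x ∈ Subgroup.center G}
          = (Finset.univ.filter (· ∈ Subgroup.center G)).card := Fintype.card_subtype _
      have h2 : Nat.card {x : G // x ∈ Subgroup.center G} = p := hcenter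
      rw [Nat.card_eq_fintype_card] at h2
      rw [← h1, h2]
    rw [hfc]
  have hfin : (p : ℂ) * (d : ℂ) ^ 2 = (Fintype.card G : ℂ) * (N : ℂ) := by
    have h1 : ⅟ (Fintype.card G : ℂ) • ((p : ℂ) * (d : ℂ) ^ 2) = (N : ℂ) := by
      rw [← hsum]
      rw [invOf_eq_inv, smul_eq_mul, ← Nat.card_eq_fintype_card]
      exact havg
    calc (p : ℂ) * (d : ℂ) ^ 2
        = ((Fintype.card G : ℂ) * ⅟ (Fintype.card G : ℂ)) • ((p : ℂ) * (d : ℂ) ^ 2) := by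
          rw [mul_invOf_self, one_smul]
      _ = (Fintype.card G : ℂ) • (⅟ (Fintype.card G : ℂ) • ((p : ℂ) * (d : ℂ) ^ 2)) := by
          rw [mul_smul]
      _ = (Fintype.card G : ℂ) * (N : ℂ) := by rw [h1]; rfl
  have hnat : p * d ^ 2 = p ^ (2 * n + 1) * N := by
    rw [hcard] at hfin
    exact_mod_cast hfin
  have hd1 : 1 ≤ d := Module.finrank_pos
  have hN1 : 1 ≤ N := by
    rcases Nat.eq_zero_or_pos N with h | h
    · exfalso
      rw [h, mul_zero] at hnat
      have hpos : 0 < p * d ^ 2 := Nat.mul_pos hp.pos (by positivity)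
      omega
    · exact h
  have hd2 : p ^ (2 * n) ≤ d ^ 2 := by
    have h1 : p * d ^ 2 = p * (p ^ (2 * n) * N) := by
      rw [hnat]
      ring
    have h2 : d ^ 2 = p ^ (2 * n) * N := Nat.eq_of_mul_eq_mul_left hp.pos h1
    calc p ^ (2 * n) = p ^ (2 * n) * 1 := (mul_one _).symm
      _ ≤ p ^ (2 * n) * N := Nat.mul_le_mul_left _ hN1
      _ = d ^ 2 := h2.symm
  have hpn : p ^ n ≤ d := by
    have h1 : (p ^ n) ^ 2 ≤ d ^ 2 := by
      rw [← pow_mul]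
      have : n * 2 = 2 * n := by ring
      rw [this]
      exact hd2
    exact (Nat.pow_le_pow_iff_left (by norm_num)).1 h1
  have hdm : d ≤ m := by
    have h1 := Submodule.finrank_le W
    rwa [Module.finrank_fin_fun] at h1
  exact le_trans hpn hdm

end ExtraSpecialAux


set_option maxHeartbeats 1600000 in
/-- An extra special `p`-group of order `p^(2n+1)` (for `p` odd) has faithful dimension
`p^n`: the smallest dimension of a faithful complex representation is `p^n`. -/
theorem extraspecial_faithful_dimension
    {p n : ℕ} [Fact p.Prime] (hp : p ≠ 2)
    {G : Type} [Group G] [Fintype G]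
    (hcard : Fintype.card G = p ^ (2 * n + 1))
    (hcenter : Nat.card (Subgroup.center G) = p)
    (hcomm : ∀ a b : G, a * b * a⁻¹ * b⁻¹ ∈ Subgroup.center G)
    (hpow : ∀ g : G, g ^ p ∈ Subgroup.center G) :
    sInf {m : ℕ | ∃ ρ : G →* Matrix.GeneralLinearGroup (Fin m) ℂ, Function.Injective ρ}
      = p ^ n := by
  classical
  set S : Set ℕ :=
    {m : ℕ | ∃ ρ : G →* Matrix.GeneralLinearGroup (Fin m) ℂ, Function.Injective ρ} with hS
  have hlow : ∀ m ∈ S, p ^ n ≤ m := by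
    rintro m ⟨ρ, hρ⟩
    exact faithful_dim_lower hcard hcenter hcomm ρ hρ
  obtain ⟨A, hZA, hA, hAc⟩ := exists_maximal_abelian (G := G)
  obtain ⟨χ, hχ⟩ := exists_char A hZA hA hcenter
  letI : Fintype (G ⧸ A) := Fintype.ofFinite _
  letI : DecidableEq (G ⧸ A) := Classical.decEq _
  obtain ⟨ρ0, hρ0⟩ := exists_faithful_matrix_rep hcomm A hZA χ hχ
  have hq : Nat.card (G ⧸ A) ≤ p ^ n :=
    quotient_card_le hcard hcomm A hZA hA hAc (χ.comp (Subgroup.inclusion hZA)) hχ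
  set q : ℕ := Nat.card (G ⧸ A) with hqdef
  have hqcard : Fintype.card (G ⧸ A) = q := (Nat.card_eq_fintype_card).symm
  let eqv : (G ⧸ A) ≃ Fin q := Fintype.equivFinOfCardEq hqcard
  let re := Matrix.reindexAlgEquiv (R := ℂ) (A := ℂ) eqv
  let ρ1 : G →* (Matrix (Fin q) (Fin q) ℂ)ˣ :=
    (Units.map re.toRingEquiv.toMonoidHom).comp ρ0
  have hρ1 : Function.Injective ρ1 := by
    have h1 : Function.Injective (Units.map re.toRingEquiv.toMonoidHom) :=
      Units.map_injective re.injective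
    exact fun x y hxy => hρ0 (h1 hxy)
  have hmem : q ∈ S := ⟨ρ1, hρ1⟩
  have hq2 : p ^ n ≤ q := hlow q hmem
  have hqq : q = p ^ n := le_antisymm hq hq2
  have hmemS : p ^ n ∈ S := hqq ▸ hmem
  exact le_antisymm (Nat.sInf_le hmemS) (le_csInf ⟨_, hmemS⟩ hlow)
end

section
/- Let G be a finite p-group with p ≥ 3 and suppose ρ₁, ..., ρₙ are irreducible complex representations of G with central characters χ₁, ..., χₙ, such that the restrictions of the χᵢ to Ω₁(Z(G)) span the Pontryagin dual of Ω₁(Z(G)) as a ℤ/pℤ-vector space. Then the direct sum ρ₁ ⊕ ... ⊕ ρₙ is a faithful representation of G. -/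
/-- A nontrivial normal subgroup of a finite `p`-group meets the center nontrivially. -/
lemma aux_normal_meets_center {p : ℕ} [Fact p.Prime] {G : Type} [Group G] [Fintype G]
    (hG : IsPGroup p G) (N : Subgroup G) [N.Normal] [Nontrivial N] :
    ∃ z : G, z ∈ N ∧ z ∈ Subgroup.center G ∧ z ≠ 1 := by
  have hN : IsPGroup p N := hG.to_subgroup N
  obtain ⟨k, hk0, hk⟩ := hN.nontrivial_iff_card.mp inferInstance
  have hdvd : p ∣ Nat.card N := hk ▸ dvd_pow_self _ hk0.ne'
  have h1 : (1 : N) ∈ MulAction.fixedPoints (ConjAct G) N := by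
    intro g; exact smul_one g
  obtain ⟨b, hb, hb1⟩ :=
    (hG.of_equiv ConjAct.toConjAct).exists_fixed_point_of_prime_dvd_card_of_fixed_point
      (α := N) hdvd h1
  refine ⟨(b : G), b.2, ?_, ?_⟩
  · rw [Subgroup.mem_center_iff]
    intro g
    have := hb (ConjAct.toConjAct g)
    have hval : g * (b : G) * g⁻¹ = (b : G) := by
      have := congrArg (Subtype.val) this
      rwa [ConjAct.Subgroup.val_conj_smul, ConjAct.smul_def,
        ConjAct.ofConjAct_toConjAct] at this
    calc g * (b : G) = g * (b : G) * g⁻¹ * g := by group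
    _ = (b : G) * g := by rw [hval]
  · intro h
    exact hb1 (Subtype.ext h).symm

/-- In a `p`-group, a suitable power of any nontrivial element has order dividing `p`
and is nontrivial. -/
lemma aux_order_p {p : ℕ} [Fact p.Prime] {G : Type} [Group G]
    (hG : IsPGroup p G) {z : G} (hz : z ≠ 1) :
    ∃ m : ℕ, (z ^ m) ^ p = 1 ∧ z ^ m ≠ 1 := by
  obtain ⟨k, hk⟩ := hG z
  have hord : orderOf z ∣ p ^ k := orderOf_dvd_of_pow_eq_one hk
  obtain ⟨m, hm, hmo⟩ := (Nat.dvd_prime_pow Fact.out).mp hord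
  have hm1 : 1 ≤ m := by
    rcases Nat.eq_zero_or_pos m with h | h
    · exfalso; apply hz
      have := pow_orderOf_eq_one z
      rwa [hmo, h, pow_zero, pow_one] at this
    · exact h
  refine ⟨p ^ (m - 1), ?_, ?_⟩
  · rw [← pow_mul, ← pow_succ, Nat.sub_add_cancel hm1, ← hmo]
    exact pow_orderOf_eq_one z
  · intro h
    have := orderOf_dvd_of_pow_eq_one h
    rw [hmo] at this
    have hle := Nat.le_of_dvd (pow_pos (Fact.out (p := p.Prime)).pos _) this
    exact absurd hle (not_le.mpr (Nat.pow_lt_pow_right (Fact.out (p := p.Prime)).one_lt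
      (Nat.sub_lt hm1 one_pos)))

/-- Let `G` be a finite `p`-group with `p ≥ 3`, and let `ρ₁, …, ρₙ` be irreducible complex
representations of `G` with central characters `χ₁, …, χₙ`.  If the restrictions of the
`χᵢ` to `Ω₁(Z(G)) = {z ∈ Z(G) : z^p = 1}` span the Pontryagin dual of `Ω₁(Z(G))` (i.e.
every character of the center restricted to `Ω₁(Z(G))` is a product of integer powers of
the `χᵢ` there), then the direct sum `ρ₁ ⊕ ⋯ ⊕ ρₙ` is a faithful representation of `G`. -/
theorem direct_sum_faithful_of_central_characters_span
    {p : ℕ} [Fact p.Prime] (hp : 3 ≤ p)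
    {G : Type} [Group G] [Fintype G] (hG : IsPGroup p G)
    {n : ℕ} (V : Fin n → Type)
    [∀ i, AddCommGroup (V i)] [∀ i, Module ℂ (V i)] [∀ i, FiniteDimensional ℂ (V i)]
    (ρ : ∀ i, Representation ℂ G (V i))
    (hirr : ∀ i, ((⊥ : Submodule ℂ (V i)) ≠ ⊤) ∧
      ∀ W : Submodule ℂ (V i), (∀ (g : G), ∀ w ∈ W, ρ i g w ∈ W) → W = ⊥ ∨ W = ⊤)
    (χ : ∀ _ : Fin n, Subgroup.center G →* ℂˣ)
    (hχ : ∀ i (z : Subgroup.center G) (v : V i), ρ i (z : G) v = (χ i z : ℂ) • v)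
    (hspan : ∀ ψ : Subgroup.center G →* ℂˣ,
      ∃ e : Fin n → ℤ, ∀ z : Subgroup.center G, (z : G) ^ p = 1 →
        ψ z = ∏ i, (χ i z) ^ (e i)) :
    Function.Injective (fun g : G => (fun i => ρ i g : ∀ i, Module.End ℂ (V i))) := by
  classical
  let f : G →* (∀ i, Module.End ℂ (V i)) := Pi.monoidHom ρ
  show Function.Injective f
  rw [injective_iff_map_eq_one]
  intro g hg
  by_contra hg1
  -- the kernel of `f` is a nontrivial normal subgroup
  have hgker : g ∈ f.ker := hg
  have : Nontrivial f.ker := ⟨⟨⟨g, hgker⟩, 1, by simp [hg1]⟩⟩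
  obtain ⟨z, hzN, hzc, hz1⟩ := aux_normal_meets_center hG f.ker
  -- pass to a nontrivial element of order dividing `p` in the kernel and the center
  obtain ⟨m, hwp, hw1⟩ := aux_order_p hG hz1
  set w : G := z ^ m with hw
  have hwN : w ∈ f.ker := pow_mem hzN m
  have hwc : w ∈ Subgroup.center G := pow_mem hzc m
  set zc : Subgroup.center G := ⟨w, hwc⟩ with hzc'
  have hzc1 : zc ≠ 1 := fun h => hw1 (congrArg Subtype.val h)
  -- each central character is trivial at `zc`
  have hchi : ∀ i, χ i zc = 1 := by
    intro i
    have hρ1 : ρ i w = 1 := congrFun hwN i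
    have hV : Nontrivial (V i) := by
      by_contra h
      have hs : Subsingleton (V i) := not_nontrivial_iff_subsingleton.mp h
      exact (hirr i).1 (Subsingleton.elim _ _)
    obtain ⟨v, hv⟩ := exists_ne (0 : V i)
    have := hχ i zc v
    rw [show ((zc : G)) = w from rfl, hρ1] at this
    have hsmul : ((χ i zc : ℂ) - 1) • v = 0 := by
      rw [sub_smul, one_smul, ← this]; simp
    rcases smul_eq_zero.mp hsmul with h | h
    · exact Units.val_eq_one.mp (sub_eq_zero.mp h)
    · exact absurd h hv
  -- a character of the center separating `zc` from `1`
  have : NeZero (Monoid.exponent (Subgroup.center G)) :=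
    ⟨Monoid.exponent_ne_zero_of_finite⟩
  open scoped IsMulCommutative in
  obtain ⟨ψ, hψ⟩ :=
    CommGroup.exists_apply_ne_one_of_hasEnoughRootsOfUnity (Subgroup.center G) ℂ hzc1
  obtain ⟨e, he⟩ := hspan ψ
  have := he zc hwp
  rw [Finset.prod_congr rfl (fun i _ => by rw [hchi i, one_zpow])] at this
  simp only [Finset.prod_const_one] at this
  exact hψ this
end
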